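/- arXiv:2109.14771 — 6 statements merged into one kernel-verified Lean document; each statement's English description precedes it below -/
import Mathlib

section
/- Let M̄ > 0, μ > 0, ρ > 1. Then there exist constants c, C, α > 0, depending only on M̄, μ, ρ (and not on N or D), with the following property: for every N ≥ 1, every symmetric continuous function f on [-1,1]^N admitting a uniformly convergent Chebyshev expansion f = Σ_{v ∈ ℕ^N} f̂_v T_v with Σ_v ρ^{‖v‖₁}|f̂_v| ≤ M̄ μ^N, and every integer D ≥ cN, the total-degree truncation f_D := Σ_{‖v‖₁ ≤ D} f̂_v T_v satisfies sup_{x ∈ [-1,1]^N} |f(x) − f_D(x)| ≤ C·exp(−α·(log P(N,D))²), where P(N,D) is the number of nondecreasing tuples 𝐯 ∈ ℕ^N with ‖𝐯‖₁ ≤ D. -/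
/-
Since `|T_v| ≤ 1` on the cube, every discarded term of the expansion is bounded by
`ρ^{-(D+1)} ρ^{‖v‖₁} |f̂_v|`, so `|f - f_D| ≤ M̄ μ^N ρ^{-(D+1)}`, which is at most `M̄ ρ^{-D/2}`
once `D ≥ cN` with `c log ρ ≥ 2 log μ`.

A nondecreasing tuple is determined by the multiplicities `m_k` of its nonzero values (the number
of zeros being `N - Σ m_k`), and `Σ_k k m_k = ‖v‖₁`. Hence `P(N,D) ≤ #{m : Σ k m_k ≤ D}`, and
comparing with the partition generating function gives, for `0 < x < 1`,
`P(N,D) x^D ≤ Π_k (1 - x^k)⁻¹ ≤ exp(π²/(6(1-x)))`, the last step by expanding each logarithm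
and using `Σ_k x^{jk} ≤ x^j/(1 - x^j) ≤ 1/(j(1-x))`. The choice `x = √D/(√D+1)` yields
`log P(N,D) ≤ 5√D`, so `(log P(N,D))² ≤ 25 D` and `α = log ρ / 50` works.
-/

open scoped BigOperators Classical

/-- The Chebyshev tensor product basis function `T_v(x) = ∏_t T_{v_t}(x_t)`. -/
noncomputable def chebProd {N : ℕ} (v : Fin N → ℕ) (x : Fin N → ℝ) : ℝ :=
  ∏ t : Fin N, (Polynomial.Chebyshev.T ℝ (v t : ℤ)).eval (x t)

/-- The total-degree `D` truncation of the Chebyshev series with coefficients `fhat`. -/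
noncomputable def chebTrunc {N : ℕ} (fhat : (Fin N → ℕ) → ℝ) (D : ℕ)
    (x : Fin N → ℝ) : ℝ :=
  ∑' v : Fin N → ℕ, if (∑ t, v t) ≤ D then fhat v * chebProd v x else 0

/-- The finite set of nondecreasing tuples `𝐯 ∈ ℕ^N` with `‖𝐯‖₁ ≤ D`;
its cardinality is `P(N,D)`. -/
noncomputable def ordTuples (N D : ℕ) : Finset (Fin N → ℕ) :=
  (Fintype.piFinset fun _ : Fin N => Finset.range (D + 1)).filter
    (fun v => Monotone v ∧ ∑ t, v t ≤ D)

open Finset Real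

section Multiplicities

variable {N : ℕ}

def multiplicities (n : ℕ) (v : Fin N → ℕ) : Fin n → ℕ := fun k => #{t | v t = k + 1}

theorem sum_comp_eq_sum_multiplicities_add {M : Type*} [AddCommMonoid M] {n : ℕ} {v : Fin N → ℕ}
    (hv : ∀ t, v t ≤ n) (F : ℕ → M) :
    ∑ t, F (v t) = ∑ k : Fin n, multiplicities n v k • F (k + 1) + #{t | v t = 0} • F 0 := by
  have hfiber : ∀ a, ∑ t with v t = a, F (v t) = #{t | v t = a} • F a := fun a => by
    rw [← sum_const]
    exact sum_congr rfl fun t ht => by rw [(mem_filter.1 ht).2]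
  rw [← sum_fiberwise_of_maps_to (g := v) (t := range (n + 1))
    fun t _ => mem_range.2 (Nat.lt_succ_of_le (hv t))]
  simp only [hfiber]
  rw [sum_range_succ', ← Fin.sum_univ_eq_sum_range (fun a => #{t | v t = a + 1} • F (a + 1))]
  rfl

theorem sum_succ_mul_multiplicities {n : ℕ} {v : Fin N → ℕ} (hv : ∀ t, v t ≤ n) :
    ∑ k : Fin n, (k + 1) * multiplicities n v k = ∑ t, v t := by
  simpa [mul_comm] using (sum_comp_eq_sum_multiplicities_add hv id).symm

theorem sum_multiplicities_add_card_eq_zero {n : ℕ} {v : Fin N → ℕ} (hv : ∀ t, v t ≤ n) :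
    ∑ k : Fin n, multiplicities n v k + #{t | v t = 0} = N := by
  simpa using (sum_comp_eq_sum_multiplicities_add hv fun _ => (1 : ℕ)).symm

theorem Monotone.eq_of_map_univ_eq {α : Type*} [LinearOrder α] {v w : Fin N → α}
    (hv : Monotone v) (hw : Monotone w) (h : univ.val.map v = univ.val.map w) : v = w := by
  rw [Fin.univ_val_map, Fin.univ_val_map, Multiset.coe_eq_coe] at h
  exact List.ofFn_injective (h.eq_of_sortedLE hv.sortedLE_ofFn hw.sortedLE_ofFn)

theorem count_map_univ_val {α : Type*} [DecidableEq α] (v : Fin N → α) (a : α) :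
    (univ.val.map v).count a = #{t | v t = a} := by
  rw [Multiset.count_map, card_def, filter_val]
  simp only [eq_comm]

theorem injOn_multiplicities {n : ℕ} :
    Set.InjOn (multiplicities n) {v : Fin N → ℕ | Monotone v ∧ ∀ t, v t ≤ n} := by
  rintro v ⟨hv, hvn⟩ w ⟨hw, hwn⟩ h
  have hpos : ∀ a ≠ 0, #{t | v t = a} = #{t | w t = a} := by
    intro a ha
    rcases le_or_gt a n with han | han
    · obtain ⟨k, rfl⟩ := Nat.exists_eq_succ_of_ne_zero ha
      exact congrFun h ⟨k, han⟩
    · rw [card_eq_zero.2 (filter_eq_empty_iff.2 fun t _ => by have := hvn t; omega),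
        card_eq_zero.2 (filter_eq_empty_iff.2 fun t _ => by have := hwn t; omega)]
  have hzero : #{t | v t = 0} = #{t | w t = 0} := by
    have hv0 := sum_multiplicities_add_card_eq_zero hvn
    have hw0 := sum_multiplicities_add_card_eq_zero hwn
    rw [h] at hv0
    omega
  refine hv.eq_of_map_univ_eq hw (Multiset.ext.2 fun a => ?_)
  rw [count_map_univ_val, count_map_univ_val]
  rcases eq_or_ne a 0 with rfl | ha
  exacts [hzero, hpos a ha]

theorem mem_ordTuples {D : ℕ} {v : Fin N → ℕ} :
    v ∈ ordTuples N D ↔ (∀ t, v t ≤ D) ∧ Monotone v ∧ ∑ t, v t ≤ D := by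
  simp [ordTuples]

def weightedTuples (n D : ℕ) : Finset (Fin n → ℕ) :=
  {m ∈ Fintype.piFinset fun _ => range (D + 1) | ∑ k : Fin n, (k + 1) * m k ≤ D}

theorem multiplicities_mem_weightedTuples {D : ℕ} {v : Fin N → ℕ} (hv : v ∈ ordTuples N D) :
    multiplicities D v ∈ weightedTuples D D := by
  rw [mem_ordTuples] at hv
  have hweight := sum_succ_mul_multiplicities hv.1
  simp only [weightedTuples, mem_filter, Fintype.mem_piFinset, mem_range, hweight]
  refine ⟨fun k => Nat.lt_succ_of_le ?_, hv.2.2⟩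
  calc multiplicities D v k ≤ (k + 1) * multiplicities D v k := Nat.le_mul_of_pos_left _ k.succ_pos
    _ ≤ ∑ k : Fin D, (k + 1) * multiplicities D v k :=
      single_le_sum (f := fun k : Fin D => (k + 1) * multiplicities D v k)
        (fun _ _ => Nat.zero_le _) (mem_univ k)
    _ ≤ D := hweight ▸ hv.2.2

theorem card_ordTuples_le_card_weightedTuples (N D : ℕ) :
    #(ordTuples N D) ≤ #(weightedTuples D D) :=
  card_le_card_of_injOn _ (fun _ hv => multiplicities_mem_weightedTuples hv) <|
    injOn_multiplicities.mono fun _ hv => by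
      obtain ⟨hle, hmono, -⟩ := mem_ordTuples.1 hv
      exact ⟨hmono, hle⟩

end Multiplicities

theorem card_weightedTuples_mul_pow_le (n D : ℕ) {x : ℝ} (hx0 : 0 ≤ x) (hx1 : x < 1) :
    #(weightedTuples n D) * x ^ D ≤ ∏ k : Fin n, (1 - x ^ (k + 1 : ℕ))⁻¹ :=
  calc #(weightedTuples n D) * x ^ D
      ≤ ∑ m ∈ weightedTuples n D, x ^ ∑ k : Fin n, (k + 1) * m k := by
        rw [← nsmul_eq_mul, ← sum_const]
        exact sum_le_sum fun m hm => pow_le_pow_of_le_one hx0 hx1.le (mem_filter.1 hm).2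
    _ ≤ ∑ m ∈ Fintype.piFinset fun _ : Fin n => range (D + 1),
          ∏ k : Fin n, (x ^ (k + 1 : ℕ)) ^ m k := by
        simp only [← pow_mul, prod_pow_eq_pow_sum]
        exact sum_le_sum_of_subset_of_nonneg (filter_subset _ _) fun _ _ _ => by positivity
    _ = ∏ k : Fin n, ∑ j ∈ range (D + 1), (x ^ (k + 1 : ℕ)) ^ j := (prod_univ_sum _ _).symm
    _ ≤ ∏ k : Fin n, (1 - x ^ (k + 1 : ℕ))⁻¹ := by
        refine prod_le_prod (fun _ _ => by positivity) fun k _ => ?_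
        simpa using geom_sum_Ico_le_of_lt_one (m := 0) (n := D + 1) (pow_nonneg hx0 _)
          (pow_lt_one₀ hx0 hx1 (Nat.succ_ne_zero _))

theorem succ_mul_one_sub_mul_pow_le {x : ℝ} (hx0 : 0 ≤ x) (hx1 : x ≤ 1) (j : ℕ) :
    (j + 1) * (1 - x) * x ^ (j + 1) ≤ 1 - x ^ (j + 1) := by
  rw [← mul_neg_geom_sum, mul_comm _ (1 - x), mul_assoc]
  refine mul_le_mul_of_nonneg_left ?_ (sub_nonneg.2 hx1)
  simpa using card_nsmul_le_sum (range (j + 1)) (x ^ ·) (x ^ (j + 1)) fun i hi =>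
    pow_le_pow_of_le_one hx0 hx1 (by simp at hi; omega)

theorem sum_neg_log_one_sub_pow_le (n : ℕ) {x : ℝ} (hx0 : 0 ≤ x) (hx1 : x < 1) :
    ∑ k : Fin n, -log (1 - x ^ (k + 1 : ℕ)) ≤ π ^ 2 / 6 / (1 - x) := by
  have hlog : ∀ k : Fin n, HasSum (fun j : ℕ => (x ^ (k + 1 : ℕ)) ^ (j + 1) / (j + 1))
      (-log (1 - x ^ (k + 1 : ℕ))) := fun k =>
    hasSum_pow_div_log_of_abs_lt_one <| by
      rw [abs_of_nonneg (by positivity)]; exact pow_lt_one₀ hx0 hx1 (Nat.succ_ne_zero _)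
  have hbasel : HasSum (fun j : ℕ => 1 / ((j : ℝ) + 1) ^ 2) (π ^ 2 / 6) := by
    have h := (hasSum_nat_add_iff (f := fun j : ℕ => 1 / (j : ℝ) ^ 2) 1).2
      (by simpa using hasSum_zeta_two)
    simpa using h
  refine hasSum_le (fun j => ?_) (hasSum_sum fun k _ => hlog k) (hbasel.div_const (1 - x))
  set y := x ^ (j + 1)
  have hy0 : 0 ≤ y := by positivity
  have hy1 : y < 1 := pow_lt_one₀ hx0 hx1 (Nat.succ_ne_zero _)
  calc ∑ k : Fin n, (x ^ (k + 1 : ℕ)) ^ (j + 1) / (j + 1)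
      = (∑ i ∈ Ico 1 (n + 1), y ^ i) / (j + 1) := by
        rw [sum_div, Fin.sum_univ_eq_sum_range (fun k => (x ^ (k + 1)) ^ (j + 1) / (j + 1)),
          sum_Ico_eq_sum_range]
        simp only [← pow_mul, y, add_tsub_cancel_right, mul_comm, add_comm 1]
    _ ≤ y / (1 - y) / (j + 1) := by
        gcongr
        simpa using geom_sum_Ico_le_of_lt_one (m := 1) (n := n + 1) hy0 hy1
    _ ≤ 1 / ((j + 1) * (1 - x)) / (j + 1) := by
        gcongr ?_ / _
        rw [div_le_div_iff₀ (sub_pos.2 hy1) (by positivity)]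
        linarith [succ_mul_one_sub_mul_pow_le hx0 hx1.le j]
    _ = 1 / ((j : ℝ) + 1) ^ 2 / (1 - x) := by
        field_simp

theorem card_ordTuples_pos (N D : ℕ) : 0 < #(ordTuples N D) :=
  card_pos.2 ⟨0, mem_ordTuples.2 ⟨fun _ => Nat.zero_le _, monotone_const, by simp⟩⟩

theorem log_card_ordTuples_le (N : ℕ) {D : ℕ} (hD : 0 < D) :
    log #(ordTuples N D) ≤ 5 * √D := by
  set s := √(D : ℝ)
  have hs1 : 1 ≤ s := one_le_sqrt.2 (Nat.one_le_cast.2 hD)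
  have hDs : (D : ℝ) = s * s := (mul_self_sqrt (Nat.cast_nonneg D)).symm
  set x := s / (s + 1) with hx
  have hx0 : 0 < x := by positivity
  have hx1 : x < 1 := (div_lt_one (by positivity)).2 (lt_add_one s)
  have hfactor : ∀ k : Fin D, 0 < 1 - x ^ (k + 1 : ℕ) := fun k =>
    sub_pos.2 (pow_lt_one₀ hx0.le hx1 (Nat.succ_ne_zero _))
  have hP : (0 : ℝ) < #(ordTuples N D) := Nat.cast_pos.2 (card_ordTuples_pos N D)
  have hcard : (#(ordTuples N D) : ℝ) * x ^ D ≤ ∏ k : Fin D, (1 - x ^ (k + 1 : ℕ))⁻¹ :=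
    (mul_le_mul_of_nonneg_right (by exact_mod_cast card_ordTuples_le_card_weightedTuples N D)
      (by positivity)).trans (card_weightedTuples_mul_pow_le D D hx0.le hx1)
  have hlog_card : log #(ordTuples N D) + D * log x ≤ ∑ k : Fin D, -log (1 - x ^ (k + 1 : ℕ)) := by
    have := log_le_log (mul_pos hP (pow_pos hx0 D)) hcard
    rwa [log_mul hP.ne' (by positivity), log_pow,
      log_prod fun k _ => (inv_pos.2 (hfactor k)).ne', sum_congr rfl fun k _ => log_inv _] at this
  have hsum : ∑ k : Fin D, -log (1 - x ^ (k + 1 : ℕ)) ≤ 2 * (s + 1) := by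
    have hone_sub : 1 - x = (s + 1)⁻¹ := by rw [hx]; field_simp; ring
    have hpi : π ^ 2 / 6 ≤ 2 := by nlinarith [pi_lt_d2, pi_pos]
    calc _ ≤ π ^ 2 / 6 / (1 - x) := sum_neg_log_one_sub_pow_le D hx0.le hx1
      _ ≤ 2 * (s + 1) := by rw [hone_sub, div_inv_eq_mul]; gcongr
  have hlog_x : -(D * log x) ≤ s := by
    have hlog_inv : -log x ≤ 1 / s := by
      rw [← log_inv, hx, inv_div]
      linarith [log_le_sub_one_of_pos (show 0 < (s + 1) / s by positivity), add_div s 1 s,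
        div_self (by positivity : s ≠ 0)]
    calc -(D * log x) = D * -log x := by ring
      _ ≤ D * (1 / s) := by gcongr
      _ = s := by rw [hDs]; field_simp
  linarith

theorem abs_chebProd_le_one {N : ℕ} (v : Fin N → ℕ) {x : Fin N → ℝ}
    (hx : ∀ t, x t ∈ Set.Icc (-1 : ℝ) 1) : |chebProd v x| ≤ 1 := by
  rw [chebProd, abs_prod]
  exact prod_le_one (fun _ _ => abs_nonneg _) fun t _ =>
    Polynomial.Chebyshev.abs_eval_T_real_le_one _ (abs_le.2 (hx t))

theorem abs_tsum_sub_chebTrunc_le {N : ℕ} {fhat : (Fin N → ℕ) → ℝ} {ρ : ℝ} (hρ : 1 ≤ ρ)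
    (hsum : Summable fun v : Fin N → ℕ => ρ ^ (∑ t, v t) * |fhat v|) {x : Fin N → ℝ}
    (hx : ∀ t, x t ∈ Set.Icc (-1 : ℝ) 1) (D : ℕ) :
    |(∑' v, fhat v * chebProd v x) - chebTrunc fhat D x|
      ≤ (∑' v, ρ ^ (∑ t, v t) * |fhat v|) / ρ ^ (D + 1) := by
  have hterm : ∀ v, ‖fhat v * chebProd v x‖ ≤ |fhat v| := fun v => by
    rw [norm_mul, Real.norm_eq_abs, Real.norm_eq_abs]
    exact mul_le_of_le_one_right (abs_nonneg _) (abs_chebProd_le_one v hx)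
  have hweight : ∀ v : Fin N → ℕ, |fhat v| ≤ ρ ^ (∑ t, v t) * |fhat v| := fun v =>
    le_mul_of_one_le_left (abs_nonneg _) (one_le_pow₀ hρ)
  have hfull : Summable fun v => fhat v * chebProd v x :=
    .of_norm_bounded hsum fun v => (hterm v).trans (hweight v)
  have htrunc : Summable fun v : Fin N → ℕ =>
      if ∑ t, v t ≤ D then fhat v * chebProd v x else 0 :=
    .of_norm_bounded hsum fun v => by
      split_ifs
      · exact (hterm v).trans (hweight v)
      · simpa using mul_nonneg (pow_nonneg (zero_le_one.trans hρ) _) (abs_nonneg (fhat v))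
  rw [chebTrunc, ← hfull.tsum_sub htrunc, ← Real.norm_eq_abs]
  refine tsum_of_norm_bounded (hsum.hasSum.div_const _) fun v => ?_
  split_ifs with hv
  · simpa using div_nonneg (mul_nonneg (pow_nonneg (zero_le_one.trans hρ) _) (abs_nonneg (fhat v)))
      (pow_nonneg (zero_le_one.trans hρ) _)
  · rw [sub_zero, le_div_iff₀ (pow_pos (zero_lt_one.trans_le hρ) _), mul_comm _ |fhat v|]
    exact mul_le_mul (hterm v) (pow_le_pow_right₀ hρ (by omega)) (by positivity) (abs_nonneg _)

/-- for fixed `M̄, μ > 0`, `ρ > 1` there exist `c, C, α > 0`, independent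
of `N` and `D`, such that for every `N ≥ 1`, every symmetric `f` on `[-1,1]^N` in the
Korobov class `𝒦(M̄,μ,ρ)` and every `D ≥ cN`, the total-degree truncation `f_D`
satisfies `‖f − f_D‖_∞ ≤ C exp(−α (log P(N,D))²)`. -/
theorem symmetric_cheb_rate_in_parameters
    (Mb μ ρ : ℝ) (hM : 0 < Mb) (hμ : 0 < μ) (hρ : 1 < ρ) :
    ∃ c C α : ℝ, 0 < c ∧ 0 < C ∧ 0 < α ∧
      ∀ N : ℕ, 1 ≤ N →
      ∀ (f : (Fin N → ℝ) → ℝ) (fhat : (Fin N → ℕ) → ℝ),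
        (∀ σ : Equiv.Perm (Fin N), ∀ x : Fin N → ℝ,
          (∀ t, x t ∈ Set.Icc (-1 : ℝ) 1) → f (x ∘ σ) = f x) →
        (∀ x : Fin N → ℝ, (∀ t, x t ∈ Set.Icc (-1 : ℝ) 1) →
          HasSum (fun v : Fin N → ℕ => fhat v * chebProd v x) (f x)) →
        Summable (fun v : Fin N → ℕ => ρ ^ (∑ t, v t) * |fhat v|) →
        (∑' v : Fin N → ℕ, ρ ^ (∑ t, v t) * |fhat v|) ≤ Mb * μ ^ N →
        ∀ D : ℕ, c * N ≤ (D : ℝ) →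
          ∀ x : Fin N → ℝ, (∀ t, x t ∈ Set.Icc (-1 : ℝ) 1) →
            |f x - chebTrunc fhat D x|
              ≤ C * Real.exp (-α * (Real.log ((ordTuples N D).card : ℝ)) ^ 2) := by
  have hlogρ : 0 < log ρ := log_pos hρ
  obtain ⟨c, hc1, hcμ⟩ : ∃ c : ℝ, 1 ≤ c ∧ 2 * log μ ≤ c * log ρ :=
    ⟨max 1 (2 * log μ / log ρ), le_max_left _ _, (div_le_iff₀ hlogρ).1 (le_max_right _ _)⟩
  refine ⟨c, Mb, log ρ / 50, by linarith, hM, by positivity, ?_⟩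
  intro N hN f fhat _ hf hsum hK D hD x hx
  have hD1 : (1 : ℝ) ≤ D := le_trans (by nlinarith [(Nat.one_le_cast (α := ℝ)).2 hN]) hD
  have hL : log #(ordTuples N D) ^ 2 ≤ 25 * D := by
    have hL0 : 0 ≤ log #(ordTuples N D) :=
      log_nonneg (Nat.one_le_cast.2 (card_ordTuples_pos N D))
    calc log #(ordTuples N D) ^ 2 ≤ (5 * √D) ^ 2 :=
          pow_le_pow_left₀ hL0 (log_card_ordTuples_le N (by exact_mod_cast hD1)) 2
      _ = 25 * D := by rw [mul_pow, sq_sqrt (Nat.cast_nonneg D)]; norm_num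
  have hdecay : μ ^ N / ρ ^ (D + 1) ≤ exp (-(log ρ / 2) * D) := by
    rw [← exp_log (div_pos (pow_pos hμ N) (pow_pos (zero_lt_one.trans hρ) _)), exp_le_exp,
      log_div (by positivity) (by positivity), log_pow, log_pow]
    push_cast
    nlinarith [mul_le_mul_of_nonneg_left hcμ (Nat.cast_nonneg N : (0 : ℝ) ≤ N),
      mul_le_mul_of_nonneg_right hD hlogρ.le]
  calc |f x - chebTrunc fhat D x|
      ≤ (∑' v, ρ ^ (∑ t, v t) * |fhat v|) / ρ ^ (D + 1) :=
        (hf x hx).tsum_eq ▸ abs_tsum_sub_chebTrunc_le hρ.le hsum hx D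
    _ ≤ Mb * (μ ^ N / ρ ^ (D + 1)) := by rw [mul_div_assoc']; gcongr
    _ ≤ Mb * exp (-(log ρ / 2) * D) := by gcongr
    _ ≤ Mb * exp (-(log ρ / 50) * log #(ordTuples N D) ^ 2) :=
        mul_le_mul_of_nonneg_left (exp_le_exp.2 (by nlinarith)) hM.le
end

section
/- Fix an integer d ≥ 1 and a constant c > 0, and let c_d : {1,2,3,…} → ℕ satisfy c_d(i) ≤ c·(i+1)(i+2)⋯(i+d−1) for all i ≥ 1 (for d = 1 the empty product equals 1, i.e. c_d(i) ≤ c). Let f(n) denote the number of multisets of letters from an alphabet having exactly c_d(i) distinct letters of degree i for each i ≥ 1, whose degrees sum to n (with f(0) = 1). Then f(n) ≤ exp(β_d · n^{d/(d+1)}) for all n ∈ ℕ, where β_d := ((d+1)/d) · (c · d! · p_d · ζ(d+1))^{1/(d+1)}, p_d := sup_{x > 0} x^{d+1} e^{−x}/(1 − e^{−x})^{d+1}, and ζ is the Riemann zeta function. -/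
open scoped BigOperators

/-- The alphabet with exactly `c_d i` distinct letters of each degree `i ≥ 1`. -/
def Letter (c_d : ℕ → ℕ) : Type := Σ i : {i : ℕ // 0 < i}, Fin (c_d i.1)

/-- Total degree of a multiset of letters (a finitely supported multiplicity
function): the sum of multiplicity × degree over all letters. -/
def msetDegree {c_d : ℕ → ℕ} (m : Letter c_d →₀ ℕ) : ℕ :=
  m.sum fun ℓ k => k * ℓ.1.1

/-- `partCount c_d n` = number of multisets of letters of total degree exactly `n`. -/
noncomputable def partCount (c_d : ℕ → ℕ) (n : ℕ) : ℕ :=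
  Nat.card {m : Letter c_d →₀ ℕ // msetDegree m = n}

/-!
Rankin's trick: for `x = e^{-t}` with `t > 0`, `f(n) xⁿ` is at most the truncated generating
function `∏_{i ≤ n} (1 - xⁱ)^{-c_d(i)}`. Expanding the logarithms, its logarithm is
`∑_k (1/k) ∑_i c_d(i) x^{ik}`, and since `(i+1)⋯(i+d-1) = (d-1)! C(i+d-1, d-1)` the inner sum
is at most `c (d-1)! ((1 - x^k)^{-d} - 1)`. The definition of `p_d` is exactly what makes
`(1 - e^{-s})^{-d} - 1 ≤ p_d / s^d`, so `log f(n) ≤ t n + c (d-1)! p_d ζ(d+1) / t^d`, and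
choosing the minimising `t` gives the bound.
-/

open Finset Real Filter Topology
open scoped Nat

theorem card_filter_sum_mul_eq_mul_pow_le {ι : Type*} [Fintype ι] [DecidableEq ι]
    (w : ι → ℕ) (hw : ∀ i, 0 < w i) {x : ℝ} (hx0 : 0 ≤ x) (hx1 : x < 1) (N n : ℕ) :
    (#{g ∈ Fintype.piFinset fun _ => range N | ∑ i, g i * w i = n} : ℝ) * x ^ n ≤
      ∏ i, (1 - x ^ w i)⁻¹ := by
  have hxw (i : ι) : x ^ w i < 1 := pow_lt_one₀ hx0 hx1 (hw i).ne'
  calc (#{g ∈ Fintype.piFinset fun _ => range N | ∑ i, g i * w i = n} : ℝ) * x ^ n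
      = ∑ g ∈ Fintype.piFinset (fun _ => range N) with ∑ i, g i * w i = n,
          ∏ i, (x ^ w i) ^ g i := by
        rw [← nsmul_eq_mul, ← sum_const]
        refine sum_congr rfl fun g hg => ?_
        simp_rw [← pow_mul, prod_pow_eq_pow_sum, mul_comm (w _), (mem_filter.1 hg).2]
    _ ≤ ∑ g ∈ Fintype.piFinset fun _ => range N, ∏ i, (x ^ w i) ^ g i :=
        sum_le_sum_of_subset_of_nonneg (filter_subset _ _) fun _ _ _ => by positivity
    _ = ∏ i, ∑ k ∈ range N, (x ^ w i) ^ k := (prod_univ_sum _ _).symm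
    _ ≤ ∏ i, (1 - x ^ w i)⁻¹ := by
        refine prod_le_prod (fun _ _ => by positivity) fun i _ => ?_
        have := geom_sum_Ico_le_of_lt_one (m := 0) (n := N) (pow_nonneg hx0 (w i)) (hxw i)
        rwa [← range_eq_Ico, pow_zero, one_div] at this

theorem natCard_sum_mul_eq_mul_pow_le {α : Type*} (deg : α → ℕ) (hdeg : ∀ a, 0 < deg a)
    {x : ℝ} (hx0 : 0 ≤ x) (hx1 : x < 1) (n : ℕ) (s : Finset α)
    (hs : ∀ a, deg a ≤ n → a ∈ s) :
    (Nat.card {m : α →₀ ℕ // (m.sum fun a k => k * deg a) = n} : ℝ) * x ^ n ≤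
      ∏ a ∈ s, (1 - x ^ deg a)⁻¹ := by
  classical
  set S := {m : α →₀ ℕ // (m.sum fun a k => k * deg a) = n}
  set T := {g ∈ Fintype.piFinset fun _ : s => range (n + 1) | ∑ a, g a * deg a.1 = n}
  have term_le (m : S) (a : α) : m.1 a * deg a ≤ n := by
    by_cases ha : a ∈ m.1.support
    · calc m.1 a * deg a ≤ m.1.sum fun a k => k * deg a :=
          single_le_sum (f := fun a => m.1 a * deg a) (fun _ _ => Nat.zero_le _) ha
        _ = n := m.2
    · simp [Finsupp.notMem_support_iff.1 ha]
  have support_subset (m : S) : m.1.support ⊆ s := fun a ha =>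
    hs a <| (Nat.le_mul_of_pos_left _ (Nat.pos_of_ne_zero (Finsupp.mem_support_iff.1 ha))).trans
      (term_le m a)
  let restrict (m : S) : T :=
    ⟨fun a => m.1 a, by
      refine mem_filter.2 ⟨Fintype.mem_piFinset.2 fun a => mem_range.2 <| Nat.lt_succ_of_le <|
        (Nat.le_mul_of_pos_right _ (hdeg a)).trans (term_le m a), ?_⟩
      rw [sum_coe_sort s fun a => m.1 a * deg a,
        ← Finsupp.sum_of_support_subset _ (support_subset m) (fun a k => k * deg a)
          fun _ _ => zero_mul _]
      exact m.2⟩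
  have restrict_injective : Function.Injective restrict := by
    intro m m' h
    refine Subtype.ext <| Finsupp.ext fun a => ?_
    by_cases ha : a ∈ s
    · exact congrFun (congrArg Subtype.val h) ⟨a, ha⟩
    · rw [Finsupp.notMem_support_iff.1 fun h => ha (support_subset m h),
        Finsupp.notMem_support_iff.1 fun h => ha (support_subset m' h)]
  calc (Nat.card S : ℝ) * x ^ n ≤ (#T : ℝ) * x ^ n := by
        gcongr
        simpa using Nat.card_le_card_of_injective restrict restrict_injective
    _ ≤ ∏ a : s, (1 - x ^ deg a)⁻¹ :=
        card_filter_sum_mul_eq_mul_pow_le (fun a : s => deg a) (fun a => hdeg a) hx0 hx1 _ n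
    _ = ∏ a ∈ s, (1 - x ^ deg a)⁻¹ := prod_coe_sort s fun a => (1 - x ^ deg a)⁻¹

theorem partCount_mul_pow_le (c_d : ℕ → ℕ) {x : ℝ} (hx0 : 0 ≤ x) (hx1 : x < 1) (n : ℕ) :
    (partCount c_d n : ℝ) * x ^ n ≤ ∏ i ∈ Icc 1 n, (1 - x ^ i)⁻¹ ^ c_d i := by
  classical
  let s : Finset (Σ i : {i : ℕ // 0 < i}, Fin (c_d i.1)) :=
    ((Icc 1 n).subtype (0 < ·)).sigma fun _ => univ
  calc (partCount c_d n : ℝ) * x ^ n ≤ ∏ ℓ ∈ s, (1 - x ^ ℓ.1.1)⁻¹ :=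
        natCard_sum_mul_eq_mul_pow_le (fun ℓ : Letter c_d => ℓ.1.1) (fun ℓ => ℓ.1.2) hx0 hx1
          n s fun ⟨⟨_, hi⟩, _⟩ hin =>
            mem_sigma.2 ⟨mem_subtype.2 (mem_Icc.2 ⟨hi, hin⟩), mem_univ _⟩
    _ = ∏ i ∈ Icc 1 n, (1 - x ^ i)⁻¹ ^ c_d i := by
        rw [prod_sigma]
        simp only [prod_const, card_univ, Fintype.card_fin]
        exact prod_subtype_of_mem (fun i => (1 - x ^ i)⁻¹ ^ c_d i) fun i hi =>
          (mem_Icc.1 hi).1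

theorem sum_Icc_ascFactorial_mul_pow_le (k n : ℕ) {y : ℝ} (hy0 : 0 ≤ y) (hy1 : y < 1) :
    ∑ i ∈ Icc 1 n, ((i + 1).ascFactorial k : ℝ) * y ^ i ≤
      k ! * (1 / (1 - y) ^ (k + 1) - 1) := by
  have hsum := hasSum_choose_mul_geometric_of_norm_lt_one k (r := y)
    (by rwa [Real.norm_of_nonneg hy0])
  have hle := sum_le_hasSum (insert 0 (Icc 1 n)) (fun _ _ => by positivity) hsum
  rw [sum_insert (by simp)] at hle
  simp only [zero_add, Nat.choose_self, Nat.cast_one, pow_zero, mul_one] at hle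
  simp_rw [Nat.ascFactorial_eq_factorial_mul_choose, Nat.cast_mul, mul_assoc, ← mul_sum]
  gcongr
  linarith

theorem prod_Ico_one_natCast_add_eq_ascFactorial (i d : ℕ) :
    ∏ j ∈ Ico 1 d, ((i : ℝ) + j) = ((i + 1).ascFactorial (d - 1) : ℕ) := by
  rw [Nat.ascFactorial_eq_prod_range, prod_Ico_eq_prod_range]
  push_cast
  simp_rw [add_assoc]

noncomputable def expRatio (d : ℕ) (x : ℝ) : ℝ :=
  x ^ (d + 1) * exp (-x) / (1 - exp (-x)) ^ (d + 1)

noncomputable def expRatioSup (d : ℕ) : ℝ :=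
  sSup {y : ℝ | ∃ x : ℝ, 0 < x ∧ y = expRatio d x}

theorem one_sub_exp_neg_pos {x : ℝ} (hx : 0 < x) : 0 < 1 - exp (-x) := by
  simpa using exp_lt_one_iff.2 (neg_neg_of_pos hx)

theorem expRatio_le_factorial_mul_exp_one (d : ℕ) {x : ℝ} (hx : 0 < x) :
    expRatio d x ≤ (d + 1)! * exp 1 := by
  have hu := one_sub_exp_neg_pos hx
  have hquot : x / (1 - exp (-x)) ≤ 1 + x := by
    rw [div_le_iff₀ hu]
    have : (1 + x) * exp (-x) ≤ 1 := by
      rw [exp_neg, ← div_eq_mul_inv, div_le_one (exp_pos x)]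
      linarith [add_one_le_exp x]
    nlinarith
  have hpow : (1 + x) ^ (d + 1) ≤ (d + 1)! * exp (1 + x) := by
    have := pow_div_factorial_le_exp (1 + x) (by linarith) (d + 1)
    rwa [div_le_iff₀ (by positivity), mul_comm] at this
  calc expRatio d x = (x / (1 - exp (-x))) ^ (d + 1) * exp (-x) := by
        rw [expRatio, div_pow]; ring
    _ ≤ (1 + x) ^ (d + 1) * exp (-x) := by gcongr
    _ ≤ (d + 1)! * exp (1 + x) * exp (-x) := by gcongr
    _ = (d + 1)! * exp 1 := by rw [mul_assoc, ← exp_add, add_neg_cancel_right]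

theorem expRatio_le_expRatioSup (d : ℕ) {x : ℝ} (hx : 0 < x) : expRatio d x ≤ expRatioSup d :=
  le_csSup ⟨_, by rintro _ ⟨x, hx, rfl⟩; exact expRatio_le_factorial_mul_exp_one d hx⟩
    ⟨x, hx, rfl⟩

theorem expRatioSup_pos (d : ℕ) : 0 < expRatioSup d := by
  have : 0 < expRatio d 1 := by
    have := one_sub_exp_neg_pos one_pos
    unfold expRatio
    positivity
  exact this.trans_le (expRatio_le_expRatioSup d one_pos)

/-- Its derivative is `d / x ^ (d + 1) * (expRatio d x - expRatioSup d)`. -/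
theorem antitoneOn_mul_zpow_sub_one_sub_exp_neg_zpow (d : ℕ) :
    AntitoneOn (fun x => expRatioSup d * x ^ (-d : ℤ) - (1 - exp (-x)) ^ (-d : ℤ))
      (Set.Ioi 0) := by
  set p := expRatioSup d
  set m : ℤ := -d
  let g' : ℝ → ℝ := fun x => p * (m * x ^ (m - 1)) - m * (1 - exp (-x)) ^ (m - 1) * exp (-x)
  have hg (x : ℝ) (hx : 0 < x) :
      HasDerivAt (fun x => p * x ^ m - (1 - exp (-x)) ^ m) (g' x) x := by
    have hexp : HasDerivAt (fun x => 1 - exp (-x)) (exp (-x)) x := by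
      simpa using ((hasDerivAt_neg x).exp).const_sub 1
    have hpow : HasDerivAt (fun x => (1 - exp (-x)) ^ m)
        (m * (1 - exp (-x)) ^ (m - 1) * exp (-x)) x := by
      have := (hasDerivAt_zpow m _ (.inl (one_sub_exp_neg_pos hx).ne')).comp x hexp
      exact this
    exact ((hasDerivAt_zpow m x (.inl hx.ne')).const_mul p).sub hpow
  have hg'_nonpos (x : ℝ) (hx : 0 < x) : g' x ≤ 0 := by
    have hu := one_sub_exp_neg_pos hx
    have hm : m - 1 = -((d + 1 : ℕ) : ℤ) := by push_cast; ring
    have hratio := expRatio_le_expRatioSup d hx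
    rw [expRatio, div_le_iff₀ (by positivity)] at hratio
    simp only [g', hm, zpow_neg, zpow_natCast]
    rw [mul_left_comm, mul_assoc, ← mul_sub]
    refine mul_nonpos_of_nonpos_of_nonneg (by simp [m]) (sub_nonneg.2 ?_)
    rw [← div_eq_inv_mul, div_le_iff₀ (by positivity), mul_comm p, mul_assoc,
      inv_mul_eq_div, le_div_iff₀ (by positivity)]
    linarith
  refine antitoneOn_of_hasDerivWithinAt_nonpos (convex_Ioi 0)
    (fun x hx => (hg x hx).continuousAt.continuousWithinAt) (f' := g') ?_ ?_
  all_goals simp only [interior_Ioi]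
  exacts [fun x hx => (hg x hx).hasDerivWithinAt, hg'_nonpos]

theorem one_div_one_sub_exp_neg_pow_sub_one_le {d : ℕ} (hd : d ≠ 0) {s : ℝ} (hs : 0 < s) :
    1 / (1 - exp (-s)) ^ d - 1 ≤ expRatioSup d / s ^ d := by
  have hlim : Tendsto (fun x => expRatioSup d * x ^ (-d : ℤ) - (1 - exp (-x)) ^ (-d : ℤ)) atTop
      (𝓝 (expRatioSup d * 0 - 1 ^ (-d : ℤ))) := by
    refine ((tendsto_zpow_atTop_zero (by omega)).const_mul _).sub ?_
    refine ((continuousAt_zpow₀ _ _ (.inl one_ne_zero)).tendsto).comp ?_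
    simpa using tendsto_exp_neg_atTop_nhds_zero.const_sub (1 : ℝ)
  have hle := le_of_tendsto hlim <| (eventually_ge_atTop s).mono fun x hx =>
    antitoneOn_mul_zpow_sub_one_sub_exp_neg_zpow d hs (hs.trans_le hx) hx
  simp only [zpow_neg, zpow_natCast, one_pow, inv_one, mul_zero] at hle
  rw [one_div, div_eq_mul_inv]
  linarith

theorem sum_Icc_mul_pow_le_of_le_mul_prod {d : ℕ} (hd : d ≠ 0) {c : ℝ} (hc : 0 ≤ c)
    {c_d : ℕ → ℕ}
    (hcd : ∀ i : ℕ, 1 ≤ i → (c_d i : ℝ) ≤ c * ∏ j ∈ Ico 1 d, ((i : ℝ) + j))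
    (n : ℕ) {y : ℝ} (hy0 : 0 ≤ y) (hy1 : y < 1) :
    ∑ i ∈ Icc 1 n, (c_d i : ℝ) * y ^ i ≤ c * (d - 1)! * (1 / (1 - y) ^ d - 1) := by
  calc ∑ i ∈ Icc 1 n, (c_d i : ℝ) * y ^ i
      ≤ ∑ i ∈ Icc 1 n, c * ((i + 1).ascFactorial (d - 1) : ℝ) * y ^ i := by
        refine sum_le_sum fun i hi => ?_
        rw [← prod_Ico_one_natCast_add_eq_ascFactorial]
        gcongr
        exact hcd i (mem_Icc.1 hi).1
    _ ≤ c * (d - 1)! * (1 / (1 - y) ^ (d - 1 + 1) - 1) := by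
        simp_rw [mul_assoc, ← mul_sum]
        gcongr
        exact sum_Icc_ascFactorial_mul_pow_le (d - 1) n hy0 hy1
    _ = c * (d - 1)! * (1 / (1 - y) ^ d - 1) := by
        rw [Nat.sub_add_cancel (Nat.pos_of_ne_zero hd)]

theorem hasSum_sum_mul_neg_log_one_sub_pow (a : ℕ → ℝ) {s : Finset ℕ} (hs : 0 ∉ s)
    {x : ℝ} (hx0 : 0 ≤ x) (hx1 : x < 1) :
    HasSum (fun k : ℕ => (∑ i ∈ s, a i * (x ^ (k + 1)) ^ i) / (k + 1))
      (∑ i ∈ s, a i * -log (1 - x ^ i)) := by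
  have hlog (i : ℕ) (hi : i ∈ s) := hasSum_pow_div_log_of_abs_lt_one (x := x ^ i) <| by
    rw [abs_of_nonneg (by positivity)]
    exact pow_lt_one₀ hx0 hx1 (ne_of_mem_of_not_mem hi hs)
  refine (hasSum_sum fun i hi => (hlog i hi).mul_left (a i)).congr_fun fun k => ?_
  simp_rw [sum_div, ← pow_mul, mul_comm _ (k + 1), mul_div_assoc]

theorem summable_one_div_natCast_add_one_pow {p : ℕ} (hp : 1 < p) :
    Summable fun k : ℕ => 1 / ((k : ℝ) + 1) ^ p := by
  simpa using (summable_nat_add_iff 1).2 (Real.summable_one_div_nat_pow.2 hp)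

theorem sum_mul_neg_log_one_sub_exp_le {d : ℕ} (hd : d ≠ 0) {c : ℝ} (hc : 0 ≤ c)
    {c_d : ℕ → ℕ}
    (hcd : ∀ i : ℕ, 1 ≤ i → (c_d i : ℝ) ≤ c * ∏ j ∈ Ico 1 d, ((i : ℝ) + j))
    (n : ℕ) {t : ℝ} (ht : 0 < t) :
    ∑ i ∈ Icc 1 n, (c_d i : ℝ) * -log (1 - exp (-t) ^ i) ≤
      c * (d - 1)! * expRatioSup d * (∑' k : ℕ, 1 / ((k : ℝ) + 1) ^ (d + 1)) / t ^ d := by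
  set B := c * (d - 1)! * expRatioSup d
  have hterm (k : ℕ) : (∑ i ∈ Icc 1 n, (c_d i : ℝ) * (exp (-t) ^ (k + 1)) ^ i) / (k + 1) ≤
      B / t ^ d * (1 / ((k : ℝ) + 1) ^ (d + 1)) := by
    have hs : 0 < t * (k + 1) := by positivity
    have hx : exp (-t) ^ (k + 1) = exp (-(t * (k + 1))) := by
      rw [← exp_nat_mul]; push_cast; ring_nf
    calc (∑ i ∈ Icc 1 n, (c_d i : ℝ) * (exp (-t) ^ (k + 1)) ^ i) / (k + 1)
        ≤ c * (d - 1)! * (1 / (1 - exp (-(t * (k + 1)))) ^ d - 1) / (k + 1) := by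
          rw [hx]
          gcongr
          exact sum_Icc_mul_pow_le_of_le_mul_prod hd hc hcd n (exp_pos _).le
            (exp_lt_one_iff.2 (neg_neg_of_pos hs))
      _ ≤ c * (d - 1)! * (expRatioSup d / (t * (k + 1)) ^ d) / (k + 1) := by
          gcongr
          exact one_div_one_sub_exp_neg_pow_sub_one_le hd hs
      _ = B / t ^ d * (1 / ((k : ℝ) + 1) ^ (d + 1)) := by
          rw [mul_pow]
          field_simp
          ring
  have hsum := hasSum_sum_mul_neg_log_one_sub_pow (fun i => (c_d i : ℝ)) (s := Icc 1 n)
    (by simp) (exp_pos (-t)).le (exp_lt_one_iff.2 (neg_neg_of_pos ht))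
  have hzeta :=
    (summable_one_div_natCast_add_one_pow (p := d + 1) (by omega)).mul_left (B / t ^ d)
  calc _ ≤ ∑' k : ℕ, B / t ^ d * (1 / ((k : ℝ) + 1) ^ (d + 1)) :=
        hasSum_le hterm hsum hzeta.hasSum
    _ = _ := by rw [tsum_mul_left]; ring

theorem partCount_le_exp_mul_add_div_pow {d : ℕ} (hd : d ≠ 0) {c : ℝ} (hc : 0 ≤ c)
    {c_d : ℕ → ℕ}
    (hcd : ∀ i : ℕ, 1 ≤ i → (c_d i : ℝ) ≤ c * ∏ j ∈ Ico 1 d, ((i : ℝ) + j))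
    (n : ℕ) {t : ℝ} (ht : 0 < t) :
    (partCount c_d n : ℝ) ≤ exp (t * n +
      c * (d - 1)! * expRatioSup d * (∑' k : ℕ, 1 / ((k : ℝ) + 1) ^ (d + 1)) / t ^ d) := by
  have hx0 : 0 ≤ exp (-t) := (exp_pos _).le
  have hx1 : exp (-t) < 1 := exp_lt_one_iff.2 (neg_neg_of_pos ht)
  have hprod : ∏ i ∈ Icc 1 n, (1 - exp (-t) ^ i)⁻¹ ^ c_d i =
      exp (∑ i ∈ Icc 1 n, (c_d i : ℝ) * -log (1 - exp (-t) ^ i)) := by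
    rw [exp_sum]
    refine prod_congr rfl fun i hi => ?_
    have : 0 < 1 - exp (-t) ^ i :=
      sub_pos.2 (pow_lt_one₀ hx0 hx1 (Nat.one_le_iff_ne_zero.1 (mem_Icc.1 hi).1))
    rw [exp_nat_mul, exp_neg (log _), exp_log this]
  calc (partCount c_d n : ℝ) = partCount c_d n * exp (-t) ^ n * exp (t * n) := by
        rw [← exp_nat_mul, mul_assoc, ← exp_add, show (n : ℝ) * -t + t * n = 0 by ring,
          exp_zero, mul_one]
    _ ≤ exp (∑ i ∈ Icc 1 n, (c_d i : ℝ) * -log (1 - exp (-t) ^ i)) * exp (t * n) := by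
        rw [← hprod]
        gcongr
        exact partCount_mul_pow_le c_d hx0 hx1 n
    _ ≤ exp (c * (d - 1)! * expRatioSup d * (∑' k : ℕ, 1 / ((k : ℝ) + 1) ^ (d + 1)) /
          t ^ d) * exp (t * n) := by
        gcongr
        exact sum_mul_neg_log_one_sub_exp_le hd hc hcd n ht
    _ = _ := by rw [← exp_add, add_comm]

/-- The value of `t * N + A / (d * t ^ d)` at its minimiser `t = (A / N) ^ (1 / (d + 1))`. -/
theorem rpow_mul_add_div_rpow_pow_eq {d : ℕ} (hd : d ≠ 0) {A N : ℝ} (hA : 0 < A)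
    (hN : 0 < N) :
    (A / N) ^ ((1 : ℝ) / (d + 1)) * N + A / d / ((A / N) ^ ((1 : ℝ) / (d + 1))) ^ d =
      (d + 1) / d * A ^ ((1 : ℝ) / (d + 1)) * N ^ ((d : ℝ) / (d + 1)) := by
  have hroot {a : ℝ} (ha : 0 ≤ a) : (a ^ ((1 : ℝ) / (d + 1))) ^ (d + 1) = a := by
    rw [← rpow_natCast, ← rpow_mul ha]
    push_cast
    rw [one_div_mul_cancel (by positivity), rpow_one]
  rw [div_rpow hA.le hN.le]
  set u := A ^ ((1 : ℝ) / (d + 1))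
  set v := N ^ ((1 : ℝ) / (d + 1))
  have hu : u ^ (d + 1) = A := hroot hA.le
  have hv : v ^ (d + 1) = N := hroot hN.le
  have hNd : N ^ ((d : ℝ) / (d + 1)) = v ^ d := by
    rw [← rpow_natCast, ← rpow_mul hN.le]
    ring_nf
  have hv0 : 0 < v := by positivity
  have hu0 : 0 < u := by positivity
  rw [hNd, div_pow, ← hu, ← hv]
  field_simp
  ring

/-- if the alphabet has `c_d(i) ≤ c (i+1)(i+2)⋯(i+d−1)` letters of degree
`i`, then the number `f(n)` of multisets of total degree `n` satisfies
`f(n) ≤ exp(β_d n^{d/(d+1)})` with the explicit constant `β_d`. -/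
theorem partCount_le_exp
    (d : ℕ) (hd : 1 ≤ d) (c : ℝ) (hc : 0 < c) (c_d : ℕ → ℕ)
    (hcd : ∀ i : ℕ, 1 ≤ i → (c_d i : ℝ) ≤ c * ∏ j ∈ Finset.Ico 1 d, ((i : ℝ) + j)) :
    ∀ n : ℕ,
      (partCount c_d n : ℝ)
        ≤ Real.exp
            ((((d : ℝ) + 1) / d *
              (c * d.factorial *
                (sSup {y : ℝ | ∃ x : ℝ, 0 < x ∧
                    y = x ^ (d + 1) * Real.exp (-x) / (1 - Real.exp (-x)) ^ (d + 1)}) *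
                (∑' k : ℕ, 1 / ((k : ℝ) + 1) ^ (d + 1))) ^ ((1 : ℝ) / (d + 1))) *
              (n : ℝ) ^ ((d : ℝ) / (d + 1))) := by
  intro n
  change _ ≤ exp ((d + 1) / d * (c * d ! * expRatioSup d * _) ^ _ * _)
  set Z := ∑' k : ℕ, 1 / ((k : ℝ) + 1) ^ (d + 1)
  have hd0 : d ≠ 0 := by omega
  rcases n.eq_zero_or_pos with rfl | hn
  · simpa [zero_rpow (by positivity : (d : ℝ) / (d + 1) ≠ 0)] using
      partCount_mul_pow_le c_d le_rfl zero_lt_one 0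
  have hZ : 0 < Z := (summable_one_div_natCast_add_one_pow (p := d + 1) (by omega)).tsum_pos
    (fun _ => by positivity) 0 (by positivity)
  set A := c * d ! * expRatioSup d * Z with hA_def
  have hA : 0 < A := by have := expRatioSup_pos d; positivity
  have hN : (0 : ℝ) < n := by exact_mod_cast hn
  have hconst : c * (d - 1)! * expRatioSup d * Z = A / d := by
    rw [eq_div_iff (by exact_mod_cast hd0), hA_def, ← Nat.mul_factorial_pred hd0]
    push_cast
    ring
  have := partCount_le_exp_mul_add_div_pow hd0 hc.le hcd n (t := (A / n) ^ ((1 : ℝ) / (d + 1)))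
    (by positivity)
  rwa [hconst, rpow_mul_add_div_rpow_pow_eq hd0 hA hN] at this
end

section
/- Fix any function c_d : {1,2,3,…} → ℕ, and let f(n,m) denote the number of multisets consisting of exactly m letters with total degree exactly n, from an alphabet having exactly c_d(i) distinct letters of degree i for each i ≥ 1. Then for all n ≥ 0 and m ≥ 1, m · f(n,m) = Σ_{i ≥ 1, k ≥ 1, k·i ≤ n, k ≤ m} c_d(i) · f(n − k·i, m − k). -/
open scoped BigOperators

/-- Size (number of letters, counted with multiplicity) of a multiset of letters. -/
def msetSize {c_d : ℕ → ℕ} (m : Letter c_d →₀ ℕ) : ℕ :=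
  m.sum fun _ k => k

/-- `partCount₂ c_d n m` = number of multisets of exactly `m` letters with total degree
exactly `n`. -/
noncomputable def partCount₂ (c_d : ℕ → ℕ) (n m : ℕ) : ℕ :=
  Nat.card {x : Letter c_d →₀ ℕ // msetDegree x = n ∧ msetSize x = m}

/-!
Double counting of the triples `(x, ℓ, k)` with `x` a multiset of `m` letters of total degree
`n` and `1 ≤ k ≤ x ℓ`. For fixed `x` there are `∑ ℓ, x ℓ = m` of them. For fixed `(ℓ, k)`,
removing `k` copies of `ℓ` identifies the admissible `x` with the multisets of `m - k` letters
of degree `n - k * deg ℓ`; grouping the letters `ℓ` by degree `i` brings in the factor `c_d i`.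
-/

open Finset

namespace Finsupp

variable {σ : Type*}

theorem card_filter_le_apply_eq_degree (f : σ →₀ ℕ) {s : Finset σ} {m : ℕ}
    (hs : f.support ⊆ s) (hm : ∀ a, f a ≤ m) :
    #{p ∈ s ×ˢ Icc 1 m | p.2 ≤ f p.1} = f.degree := by
  have hfiber (a : σ) : #{k ∈ Icc 1 m | k ≤ f a} = f a := by
    rw [show {k ∈ Icc 1 m | k ≤ f a} = Icc 1 (f a) by
      ext k; simp only [mem_filter, mem_Icc]; have := hm a; omega]
    rw [Nat.card_Icc, Nat.add_sub_cancel]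
  rw [card_filter, sum_product, degree_apply,
    sum_subset hs fun _ _ ha => notMem_support_iff.mp ha]
  exact Finset.sum_congr rfl fun a _ => by rw [← card_filter, hfiber]

theorem apply_smul_le_weight {M : Type*} [AddCommMonoid M] [PartialOrder M]
    [CanonicallyOrderedAdd M] (w : σ → M) (f : σ →₀ ℕ) (a : σ) : f a • w a ≤ weight w f :=
  calc f a • w a = weight w (single a (f a)) := (weight_single w a (f a)).symm
    _ ≤ weight w (single a (f a)) + weight w (f - single a (f a)) := le_self_add
    _ = weight w f := by rw [← map_add, add_tsub_cancel_of_le (single_le_iff.mpr le_rfl)]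

end Finsupp

namespace Letter

variable {c_d : ℕ → ℕ}

instance : DecidableEq (Letter c_d) :=
  inferInstanceAs (DecidableEq (Σ i : {i : ℕ // 0 < i}, Fin (c_d i.1)))

theorem msetDegree_eq_weight (x : Letter c_d →₀ ℕ) :
    msetDegree x = Finsupp.weight (fun ℓ : Letter c_d => ℓ.1.1) x := rfl

theorem msetSize_eq_degree (x : Letter c_d →₀ ℕ) : msetSize x = x.degree := rfl

theorem msetDegree_add_single (x : Letter c_d →₀ ℕ) (ℓ : Letter c_d) (k : ℕ) :
    msetDegree (x + Finsupp.single ℓ k) = msetDegree x + k * ℓ.1.1 := by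
  simp [msetDegree_eq_weight, Finsupp.weight_single]

theorem msetSize_add_single (x : Letter c_d →₀ ℕ) (ℓ : Letter c_d) (k : ℕ) :
    msetSize (x + Finsupp.single ℓ k) = msetSize x + k := by
  simp [msetSize_eq_degree]

theorem apply_mul_le_msetDegree (x : Letter c_d →₀ ℕ) (ℓ : Letter c_d) :
    x ℓ * ℓ.1.1 ≤ msetDegree x :=
  Finsupp.apply_smul_le_weight (fun ℓ : Letter c_d => ℓ.1.1) x ℓ

theorem apply_le_msetSize (x : Letter c_d →₀ ℕ) (ℓ : Letter c_d) : x ℓ ≤ msetSize x :=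
  Finsupp.le_degree ℓ x

variable (c_d) in
def ofDegreeLE (n : ℕ) : Finset (Letter c_d) :=
  ((Icc 1 n).subtype (0 < ·)).sigma fun _ => univ

theorem mem_ofDegreeLE {n : ℕ} {ℓ : Letter c_d} : ℓ ∈ ofDegreeLE c_d n ↔ ℓ.1.1 ≤ n := by
  refine Finset.mem_sigma.trans ?_
  simp only [mem_subtype, mem_Icc, mem_univ, and_true, and_iff_right_iff_imp]
  exact fun _ => ℓ.1.2

theorem sum_ofDegreeLE {M : Type*} [AddCommMonoid M] (n : ℕ) (g : ℕ → M) :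
    ∑ ℓ ∈ ofDegreeLE c_d n, g ℓ.1.1 = ∑ i ∈ Icc 1 n, c_d i • g i := by
  refine (sum_sigma _ _ fun ℓ : (Σ i : {i : ℕ // 0 < i}, Fin (c_d i.1)) => g ℓ.1.1).trans ?_
  simp only [sum_const, card_univ, Fintype.card_fin]
  exact sum_subtype_of_mem (fun i => c_d i • g i) fun i hi => (mem_Icc.mp hi).1

theorem support_subset_ofDegreeLE (x : Letter c_d →₀ ℕ) :
    x.support ⊆ ofDegreeLE c_d (msetDegree x) :=
  fun _ hℓ => mem_ofDegreeLE.mpr <|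
    Finsupp.le_weight_of_ne_zero' (fun ℓ : Letter c_d => ℓ.1.1) (Finsupp.mem_support_iff.mp hℓ)

variable (c_d) in
-- Irreducible, so that unification never tries to evaluate this finset.
@[irreducible] noncomputable def msets (n m : ℕ) : Finset (Letter c_d →₀ ℕ) :=
  {x ∈ finsuppAntidiag (ofDegreeLE c_d n) m | msetDegree x = n}

theorem mem_msets {n m : ℕ} {x : Letter c_d →₀ ℕ} :
    x ∈ msets c_d n m ↔ msetDegree x = n ∧ msetSize x = m := by
  rw [msets, mem_filter, mem_finsuppAntidiag, msetSize_eq_degree, Finsupp.degree_apply]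
  have hsum {s : Finset (Letter c_d)} (hs : x.support ⊆ s) : ∑ ℓ ∈ x.support, x ℓ = s.sum x :=
    sum_subset hs fun _ _ hℓ => Finsupp.notMem_support_iff.mp hℓ
  constructor
  · rintro ⟨⟨hsize, hsupp⟩, hdeg⟩
    exact ⟨hdeg, (hsum hsupp).trans hsize⟩
  · rintro ⟨hdeg, hsize⟩
    have hsupp := hdeg ▸ support_subset_ofDegreeLE x
    exact ⟨⟨(hsum hsupp).symm.trans hsize, hsupp⟩, hdeg⟩

theorem card_msets (n m : ℕ) : #(msets c_d n m) = partCount₂ c_d n m := by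
  rw [partCount₂, ← Nat.card_eq_finsetCard]
  exact Nat.card_congr (Equiv.subtypeEquivRight fun x => mem_msets)

theorem add_single_mem_msets_iff {n m k : ℕ} {y : Letter c_d →₀ ℕ} {ℓ : Letter c_d} :
    y + Finsupp.single ℓ k ∈ msets c_d n m ↔
      k * ℓ.1.1 ≤ n ∧ k ≤ m ∧ y ∈ msets c_d (n - k * ℓ.1.1) (m - k) := by
  simp only [mem_msets, msetDegree_add_single, msetSize_add_single]
  omega

theorem card_filter_le_apply_msets {n m k : ℕ} (ℓ : Letter c_d) (hk : k ≤ m) :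
    #{x ∈ msets c_d n m | k ≤ x ℓ} =
      if k * ℓ.1.1 ≤ n then #(msets c_d (n - k * ℓ.1.1) (m - k)) else 0 := by
  have hsplit {x : Letter c_d →₀ ℕ} (hkx : k ≤ x ℓ) :
      x - Finsupp.single ℓ k + Finsupp.single ℓ k = x :=
    tsub_add_cancel_of_le (Finsupp.single_le_iff.mpr hkx)
  split_ifs with hn
  · refine card_bij' (fun x _ => x - Finsupp.single ℓ k) (fun y _ => y + Finsupp.single ℓ k)
      (fun x hx => ?_) (fun y hy => ?_) (fun x hx => hsplit (mem_filter.mp hx).2)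
      (fun y _ => add_tsub_cancel_right y _)
    · obtain ⟨hmem, hkx⟩ := mem_filter.mp hx
      rw [← hsplit hkx, add_single_mem_msets_iff] at hmem
      exact hmem.2.2
    · exact mem_filter.mpr ⟨add_single_mem_msets_iff.mpr ⟨hn, hk, hy⟩, by simp⟩
  · refine card_eq_zero.mpr (filter_eq_empty_iff.mpr fun x hx hkx => hn ?_)
    calc k * ℓ.1.1 ≤ x ℓ * ℓ.1.1 := Nat.mul_le_mul_right _ hkx
      _ ≤ msetDegree x := apply_mul_le_msetDegree x ℓ
      _ = n := (mem_msets.mp hx).1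

end Letter

open Letter

theorem partCount₂_recurrence_general (c_d : ℕ → ℕ) (n m : ℕ) :
    m * partCount₂ c_d n m =
      ∑ p ∈ (Finset.Icc 1 n ×ˢ Finset.Icc 1 m).filter
          (fun p : ℕ × ℕ => p.2 * p.1 ≤ n),
        c_d p.1 * partCount₂ c_d (n - p.2 * p.1) (m - p.2) := by
  calc m * partCount₂ c_d n m
      = ∑ x ∈ msets c_d n m, msetSize x := by
        rw [Finset.sum_congr rfl fun x hx => (mem_msets.mp hx).2, sum_const, card_msets,
          smul_eq_mul, mul_comm]
    _ = ∑ x ∈ msets c_d n m, #{p ∈ ofDegreeLE c_d n ×ˢ Icc 1 m | p.2 ≤ x p.1} := by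
        refine Finset.sum_congr rfl fun x hx => ?_
        obtain ⟨hdeg, hsize⟩ := mem_msets.mp hx
        rw [Finsupp.card_filter_le_apply_eq_degree x (hdeg ▸ support_subset_ofDegreeLE x)
          fun ℓ => hsize ▸ apply_le_msetSize x ℓ, msetSize_eq_degree]
    _ = ∑ p ∈ ofDegreeLE c_d n ×ˢ Icc 1 m, #{x ∈ msets c_d n m | p.2 ≤ x p.1} :=
        sum_card_bipartiteAbove_eq_sum_card_bipartiteBelow _
    _ = ∑ ℓ ∈ ofDegreeLE c_d n, ∑ k ∈ Icc 1 m,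
          if k * ℓ.1.1 ≤ n then partCount₂ c_d (n - k * ℓ.1.1) (m - k) else 0 := by
        rw [sum_product]
        refine Finset.sum_congr rfl fun ℓ _ => Finset.sum_congr rfl fun k hk => ?_
        rw [card_filter_le_apply_msets ℓ (mem_Icc.mp hk).2, card_msets]
    _ = ∑ i ∈ Icc 1 n, c_d i • ∑ k ∈ Icc 1 m,
          if k * i ≤ n then partCount₂ c_d (n - k * i) (m - k) else 0 :=
        sum_ofDegreeLE n fun i => ∑ k ∈ Icc 1 m,
          if k * i ≤ n then partCount₂ c_d (n - k * i) (m - k) else 0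
    _ = _ := by
        simp only [sum_filter, sum_product, smul_eq_mul, mul_sum, mul_ite, mul_zero]

/-- recurrence with number of parts: for all `n ≥ 0` and `m ≥ 1`,
`m f(n,m) = ∑_{i,k ≥ 1, ki ≤ n, k ≤ m} c_d(i) f(n − ki, m − k)`. -/
theorem partCount₂_recurrence (c_d : ℕ → ℕ) (n m : ℕ) (hm : 1 ≤ m) :
    m * partCount₂ c_d n m =
      ∑ p ∈ (Finset.Icc 1 n ×ˢ Finset.Icc 1 m).filter
          (fun p : ℕ × ℕ => p.2 * p.1 ≤ n),
        c_d p.1 * partCount₂ c_d (n - p.2 * p.1) (m - p.2) :=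
  partCount₂_recurrence_general c_d n m
end

section
/- For a real γ ≥ 0 and integers n ≥ 0, k ≥ 1, p ≥ 0, q ≥ 0, define S(n,k,γ,p,q) := Σ_{i=1}^{⌊n/k⌋} (n − ik + γ)^p · i^q. Then S(n,k,γ,p,q) ≤ β(q,p,k,γ) · (n+γ)^{p+q+1} / ((p+1)(p+2)⋯(p+q+1)), where β(0,p,k,γ) = 1, β(q,0,k,γ) = q!·2^{q+1}, and β(q,p,k,γ) = q!/k^{q+1} + (p^p q^q (p+q+1)) / (k^q (1+γ) (p+q)^p) whenever p ≥ 1 and q ≥ 1. -/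
/-!
Write the summand as `f i` with `f x = x ^ q * (A - k x) ^ p` and `A = n + γ`. Its logarithmic
derivative `q / x - p k / (A - k x)` changes sign once, at `c = q A / ((p + q) k)`, so `f` is
unimodal on `[0, A / k]`. For such a function, the sum over the integer points `1, …, ⌊n / k⌋` is
at most `∫₀^{A/k} f + max f`. Let `j` be the integer point where `f` is largest. For `i < j`,
quasiconcavity gives `f i ≤ f` on `[i, i + 1]`. For `i > j`, it gives `f i ≤ f` on `[i - 1, i]`.
The integral is a Beta integral, `q! p! A^(p+q+1) / ((p+q+1)! k^(q+1))`. The maximum is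
`f c = p^p q^q A^(p+q) / (k^q (p+q)^(p+q))`. For `q = 0`, `f` is decreasing and the integral alone
suffices. For `p = 0`, the crude bound `i ^ q ≤ ⌊n / k⌋ ^ q` is enough.
-/

open scoped BigOperators

/-- `S(n,k,γ,p,q) = ∑_{i=1}^{⌊n/k⌋} (n − ik + γ)^p i^q`. -/
noncomputable def Ssum (n k : ℕ) (γ : ℝ) (p q : ℕ) : ℝ :=
  ∑ i ∈ Finset.Icc 1 (n / k), ((n : ℝ) - i * k + γ) ^ p * (i : ℝ) ^ q

/-- The prefactor `β(q,p,k,γ)`. -/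
noncomputable def betaPrefactor (q p k : ℕ) (γ : ℝ) : ℝ :=
  if q = 0 then 1
  else if p = 0 then (q.factorial : ℝ) * 2 ^ (q + 1)
  else (q.factorial : ℝ) / k ^ (q + 1) +
    (p : ℝ) ^ p * (q : ℝ) ^ q * ((p : ℝ) + q + 1) /
      ((k : ℝ) ^ q * (1 + γ) * ((p : ℝ) + q) ^ p)

open Finset
open scoped Nat

theorem quasiconcaveOn_Icc_of_monotoneOn_of_antitoneOn {f : ℝ → ℝ} {a b c : ℝ}
    (hmono : MonotoneOn f (Set.Icc a c)) (hanti : AntitoneOn f (Set.Icc c b)) :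
    QuasiconcaveOn ℝ (Set.Icc a b) f := by
  intro r
  rw [convex_iff_ordConnected, Set.ordConnected_iff]
  rintro x ⟨hx, hrx⟩ z ⟨hz, hrz⟩ - y ⟨hxy, hyz⟩
  refine ⟨⟨hx.1.trans hxy, hyz.trans hz.2⟩, ?_⟩
  rcases le_total y c with hyc | hcy
  · exact hrx.trans (hmono ⟨hx.1, hxy.trans hyc⟩ ⟨hx.1.trans hxy, hyc⟩ hxy)
  · exact hrz.trans (hanti ⟨hcy, hyz.trans hz.2⟩ ⟨hcy.trans hyz, hz.2⟩ hyz)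

theorem QuasiconcaveOn.min_le_of_mem_Icc {f : ℝ → ℝ} {s : Set ℝ} (hf : QuasiconcaveOn ℝ s f)
    {x y z : ℝ} (hx : x ∈ s) (hz : z ∈ s) (hy : y ∈ Set.Icc x z) : min (f x) (f z) ≤ f y :=
  ((convex_iff_ordConnected.mp (hf _)).out ⟨hx, min_le_left _ _⟩ ⟨hz, min_le_right _ _⟩ hy).2

theorem sum_Ico_le_integral_of_forall_le {f : ℝ → ℝ} {g : ℕ → ℝ} {a b : ℕ} (hab : a ≤ b)
    (hf : IntervalIntegrable f MeasureTheory.volume a b)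
    (hg : ∀ i ∈ Ico a b, ∀ x ∈ Set.Icc (i : ℝ) (i + 1 : ℕ), g i ≤ f x) :
    ∑ i ∈ Ico a b, g i ≤ ∫ x in (a : ℝ)..b, f x := by
  have hcell (i : ℕ) (hai : a ≤ i) (hib : i < b) :
      IntervalIntegrable f MeasureTheory.volume i (i + 1 : ℕ) := by
    refine hf.mono_set (Set.uIcc_subset_uIcc ?_ ?_) <;>
      exact Set.mem_uIcc_of_le (Nat.cast_le.mpr (by omega)) (Nat.cast_le.mpr (by omega))
  rw [← intervalIntegral.sum_integral_adjacent_intervals_Ico hab fun i hi => hcell i hi.1 hi.2]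
  refine sum_le_sum fun i hi => ?_
  calc g i = ∫ _ in (i : ℝ)..(i + 1 : ℕ), g i := by simp
    _ ≤ ∫ x in (i : ℝ)..(i + 1 : ℕ), f x :=
      intervalIntegral.integral_mono_on (by simp) intervalIntegrable_const
        (hcell i (mem_Ico.mp hi).1 (mem_Ico.mp hi).2) (hg i hi)

theorem sum_Icc_le_integral_add_of_quasiconcaveOn {f : ℝ → ℝ} {b M : ℝ} {m : ℕ}
    (hqc : QuasiconcaveOn ℝ (Set.Icc 0 b) f) (hf : IntervalIntegrable f MeasureTheory.volume 0 b)
    (hnonneg : ∀ x ∈ Set.Icc 0 b, 0 ≤ f x) (hM : ∀ x ∈ Set.Icc 0 b, f x ≤ M)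
    (hmb : (m : ℝ) ≤ b) :
    ∑ i ∈ Icc 1 m, f i ≤ (∫ x in 0..b, f x) + M := by
  have hb : 0 ≤ b := m.cast_nonneg.trans hmb
  have hmem (i : ℕ) (hi : i ≤ m) : (i : ℝ) ∈ Set.Icc 0 b :=
    ⟨i.cast_nonneg, (Nat.cast_le.mpr hi).trans hmb⟩
  have hint (i i' : ℕ) (hi : i ≤ m) (hi' : i' ≤ m) :
      IntervalIntegrable f MeasureTheory.volume i i' :=
    hf.mono_set (Set.uIcc_subset_uIcc (Set.Icc_subset_uIcc (hmem i hi))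
      (Set.Icc_subset_uIcc (hmem i' hi')))
  rcases Nat.eq_zero_or_pos m with rfl | hm
  · simpa using add_nonneg (intervalIntegral.integral_nonneg hb hnonneg)
      ((hnonneg 0 ⟨le_rfl, hb⟩).trans (hM 0 ⟨le_rfl, hb⟩))
  obtain ⟨j, hj, hjmax⟩ :=
    exists_max_image (Icc 1 m) (fun i : ℕ => f i) ⟨1, mem_Icc.mpr ⟨le_rfl, hm⟩⟩
  rw [mem_Icc] at hj
  have hleft : ∑ i ∈ Ico 1 j, f i ≤ ∫ x in (1 : ℕ)..(j : ℝ), f x :=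
    sum_Ico_le_integral_of_forall_le hj.1 (hint 1 j hm hj.2) fun i hi x hx =>
      (min_eq_left (hjmax i (by grind))).ge.trans <|
        hqc.min_le_of_mem_Icc (hmem i (by grind)) (hmem j hj.2)
          ⟨hx.1, hx.2.trans (Nat.cast_le.mpr (by grind))⟩
  have hright : ∑ i ∈ Ico j m, f (i + 1 : ℕ) ≤ ∫ x in (j : ℝ)..(m : ℝ), f x :=
    sum_Ico_le_integral_of_forall_le hj.2 (hint j m hj.2 le_rfl) fun i hi x hx =>
      (min_eq_right (hjmax (i + 1) (by grind))).ge.trans <|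
        hqc.min_le_of_mem_Icc (hmem j hj.2) (hmem (i + 1) (by grind))
          ⟨(Nat.cast_le.mpr (by grind)).trans hx.1, hx.2⟩
  have hsplit :
      ∑ i ∈ Icc 1 m, f i = ∑ i ∈ Ico 1 j, f i + f j + ∑ i ∈ Ico j m, f (i + 1 : ℕ) := by
    rw [← Ico_add_one_right_eq_Icc, ← sum_Ico_consecutive _ (by omega : 1 ≤ j + 1)
      (by omega : j + 1 ≤ m + 1), sum_Ico_succ_top hj.1, sum_Ico_add' (fun i : ℕ => f i)]
  have hsub :
      (∫ x in (1 : ℕ)..(j : ℝ), f x) + ∫ x in (j : ℝ)..(m : ℝ), f x ≤ ∫ x in 0..b, f x := by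
    rw [intervalIntegral.integral_add_adjacent_intervals (hint 1 j hm hj.2)
      (hint j m hj.2 le_rfl)]
    exact intervalIntegral.integral_mono_interval (by simp) (by exact_mod_cast hm) hmb
      (MeasureTheory.ae_restrict_of_forall_mem measurableSet_Ioc
        fun x hx => hnonneg x (Set.Ioc_subset_Icc_self hx)) hf
  linarith [hM j (hmem j hj.2)]

theorem integral_pow_mul_one_sub_pow (p q : ℕ) :
    ∫ t in (0 : ℝ)..1, t ^ q * (1 - t) ^ p = (q ! * p ! / (p + q + 1)! : ℝ) := by
  have h := Complex.betaIntegral_eq_Gamma_mul_div (q + 1) (p + 1)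
    (by simp; positivity) (by simp; positivity)
  have e : (q : ℂ) + 1 + (p + 1) = ((p + q + 1 : ℕ) : ℂ) + 1 := by push_cast; ring
  simp only [Complex.betaIntegral, add_sub_cancel_right, Complex.cpow_natCast, e,
    Complex.Gamma_nat_eq_factorial] at h
  rw [← Complex.ofReal_inj, ← intervalIntegral.integral_ofReal]
  push_cast
  exact h

theorem integral_pow_mul_sub_mul_pow (p q : ℕ) (A K : ℝ) :
    ∫ x in (0 : ℝ)..A / K, x ^ q * (A - K * x) ^ p
      = q ! * p ! / (p + q + 1)! * A ^ (p + q + 1) / K ^ (q + 1) := by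
  rcases eq_or_ne A 0 with rfl | hA
  · simp
  -- `K = 0` is covered by `x / 0 = 0`: both sides vanish
  rcases eq_or_ne K 0 with rfl | hK
  · simp
  have hc : A / K ≠ 0 := div_ne_zero hA hK
  have hscale : ∀ t : ℝ, (A / K * t) ^ q * (A - K * (A / K * t)) ^ p
      = (A / K) ^ q * A ^ p * (t ^ q * (1 - t) ^ p) := by
    intro t
    rw [← mul_assoc, mul_div_cancel₀ _ hK, ← mul_one_sub, mul_pow A]
    ring
  have h := intervalIntegral.integral_comp_mul_left (fun x => x ^ q * (A - K * x) ^ p) hc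
    (a := 0) (b := 1)
  simp only [hscale, intervalIntegral.integral_const_mul, integral_pow_mul_one_sub_pow,
    mul_zero, mul_one, smul_eq_mul] at h
  rw [eq_inv_mul_iff_mul_eq₀ hc] at h
  rw [← h, div_pow]
  field_simp
  ring

theorem natCast_mul_pow_sub_one {x : ℝ} (hx : x ≠ 0) (n : ℕ) :
    (n : ℝ) * x ^ (n - 1) = n * x ^ n / x := by
  cases n with
  | zero => simp
  | succ n => rw [pow_succ]; field_simp; simp

section

variable (p q : ℕ) {A K : ℝ}

theorem hasDerivAt_pow_mul_sub_mul_pow {x : ℝ} (hx : x ≠ 0) (hxA : A - K * x ≠ 0) :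
    HasDerivAt (fun x => x ^ q * (A - K * x) ^ p)
      (x ^ q * (A - K * x) ^ p / (x * (A - K * x)) * (q * A - (p + q) * K * x)) x := by
  have hsub : HasDerivAt (fun x => A - K * x) (-K) x := by
    simpa using ((hasDerivAt_id' x).const_mul K).const_sub A
  refine ((hasDerivAt_pow q x).mul (hsub.pow p)).congr_deriv ?_
  rw [Pi.pow_apply, natCast_mul_pow_sub_one hx, natCast_mul_pow_sub_one hxA,
    show (q : ℝ) * A - (p + q) * K * x = q * (A - K * x) - p * K * x by ring]
  generalize A - K * x = y at hxA ⊢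
  field_simp
  ring

theorem pow_mul_sub_mul_pow_nonneg (hK : 0 < K) {x : ℝ} (hx : x ∈ Set.Icc 0 (A / K)) :
    0 ≤ x ^ q * (A - K * x) ^ p := by
  have hxA : K * x ≤ A := by rw [← le_div_iff₀' hK]; exact hx.2
  exact mul_nonneg (pow_nonneg hx.1 q) (pow_nonneg (sub_nonneg.mpr hxA) p)

theorem monotoneOn_pow_mul_sub_mul_pow (hK : 0 < K) :
    MonotoneOn (fun x => x ^ q * (A - K * x) ^ p) (Set.Icc 0 (q * A / ((p + q) * K))) := by
  have hsign (x : ℝ) (hx : x ∈ Set.Ioo 0 (q * A / ((p + q) * K))) :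
      0 < A - K * x ∧ 0 ≤ q * A - (p + q) * K * x := by
    obtain ⟨hx0, hxc⟩ := hx
    have hden : 0 < ((p : ℝ) + q) * K := by
      refine lt_of_le_of_ne (by positivity) fun h => ?_
      simp only [← h, div_zero] at hxc
      linarith
    rw [lt_div_iff₀ hden] at hxc
    have hpKx : 0 ≤ p * K * x := by positivity
    have hxA : 0 < A - K * x := by
      by_contra! h
      nlinarith [mul_nonpos_of_nonneg_of_nonpos q.cast_nonneg h]
    exact ⟨hxA, by linarith⟩
  refine monotoneOn_of_hasDerivWithinAt_nonneg
    (f' := fun x => x ^ q * (A - K * x) ^ p / (x * (A - K * x)) * (q * A - (p + q) * K * x))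
    (convex_Icc _ _) (by fun_prop) (fun x hx => ?_)
    (fun x hx => ?_) <;> rw [interior_Icc] at hx <;> obtain ⟨hxA, hs⟩ := hsign x hx
  · exact (hasDerivAt_pow_mul_sub_mul_pow p q hx.1.ne' hxA.ne').hasDerivWithinAt
  · have hx0 := hx.1
    exact mul_nonneg (by positivity) hs

theorem antitoneOn_pow_mul_sub_mul_pow (hK : 0 < K) (hA : 0 ≤ A) :
    AntitoneOn (fun x => x ^ q * (A - K * x) ^ p) (Set.Icc (q * A / ((p + q) * K)) (A / K)) := by
  have hsign (x : ℝ) (hx : x ∈ Set.Ioo (q * A / ((p + q) * K)) (A / K)) :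
      0 < x ∧ 0 < A - K * x ∧ q * A - (p + q) * K * x ≤ 0 := by
    obtain ⟨hcx, hxA⟩ := hx
    rw [lt_div_iff₀ hK] at hxA
    have hx0 : 0 < x := (by positivity : 0 ≤ q * A / ((p + q) * K)).trans_lt hcx
    refine ⟨hx0, by linarith, ?_⟩
    rcases (by positivity : 0 ≤ ((p : ℝ) + q) * K).eq_or_lt with h | h
    · have hq : (q : ℝ) = 0 := by nlinarith [(p.cast_nonneg : (0 : ℝ) ≤ p)]
      simp only [hq, zero_mul, add_zero, zero_sub, neg_nonpos]
      positivity
    · rw [div_lt_iff₀ h] at hcx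
      linarith
  refine antitoneOn_of_hasDerivWithinAt_nonpos
    (f' := fun x => x ^ q * (A - K * x) ^ p / (x * (A - K * x)) * (q * A - (p + q) * K * x))
    (convex_Icc _ _) (by fun_prop) (fun x hx => ?_)
    (fun x hx => ?_) <;> rw [interior_Icc] at hx <;> obtain ⟨hx0, hxA, hs⟩ := hsign x hx
  · exact (hasDerivAt_pow_mul_sub_mul_pow p q hx0.ne' hxA.ne').hasDerivWithinAt
  · exact mul_nonpos_of_nonneg_of_nonpos (by positivity) hs

theorem pow_mul_sub_mul_pow_le (hK : 0 < K) (hA : 0 ≤ A) (hpq : 0 < p + q) {x : ℝ}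
    (hx : x ∈ Set.Icc 0 (A / K)) :
    x ^ q * (A - K * x) ^ p ≤ p ^ p * q ^ q * A ^ (p + q) / (K ^ q * (p + q) ^ (p + q)) := by
  have hpq' : (0 : ℝ) < p + q := by exact_mod_cast hpq
  set c := q * A / ((p + q) * K) with hc_def
  have hc : c ∈ Set.Icc 0 (A / K) := by
    refine ⟨by positivity, ?_⟩
    rw [div_le_div_iff₀ (by positivity) hK]
    nlinarith [mul_nonneg (mul_nonneg p.cast_nonneg hA) hK.le]
  have hpeak : x ^ q * (A - K * x) ^ p ≤ c ^ q * (A - K * c) ^ p := by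
    rcases le_total x c with hxc | hcx
    · exact monotoneOn_pow_mul_sub_mul_pow p q hK ⟨hx.1, hxc⟩ ⟨hc.1, le_rfl⟩ hxc
    · exact antitoneOn_pow_mul_sub_mul_pow p q hK hA ⟨le_rfl, hc.2⟩ ⟨hcx, hx.2⟩ hcx
  have hAc : A - K * c = p * A / (p + q) := by
    rw [hc_def]
    field_simp
    ring
  rw [hAc, hc_def, div_pow, div_pow, mul_pow, mul_pow, mul_pow] at hpeak
  refine hpeak.trans_eq ?_
  field_simp
  ring

end

theorem factorial_mul_prod_Icc_add (p q : ℕ) :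
    (p ! : ℝ) * ∏ j ∈ Icc 1 (q + 1), ((p : ℝ) + j) = (p + q + 1)! := by
  have h : p ! * ∏ j ∈ Icc 1 (q + 1), (p + j) = (p + q + 1)! := by
    rw [add_assoc, ← Nat.factorial_mul_ascFactorial, Nat.ascFactorial_eq_prod_range, range_eq_Ico,
      ← Ico_add_one_right_eq_Icc, ← prod_Ico_add' _ 0 (q + 1) 1]
    simp only [add_assoc, add_comm 1]
  exact_mod_cast h

theorem prod_Icc_add_le (p q : ℕ) :
    ∏ j ∈ Icc 1 (q + 1), ((p : ℝ) + j) ≤ (p + q) ^ q * (p + q + 1) := by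
  have h : ∏ j ∈ Icc 1 q, (p + j) ≤ (p + q) ^ q := by
    simpa using prod_le_pow_card (Icc 1 q) (fun j => p + j) (p + q)
      fun j hj => by simp at hj; omega
  rw [prod_Icc_succ_top (by omega)]
  exact_mod_cast Nat.mul_le_mul h (by omega)

theorem Ssum_eq_sum (n k : ℕ) (γ : ℝ) (p q : ℕ) :
    Ssum n k γ p q = ∑ i ∈ Icc 1 (n / k), (i : ℝ) ^ q * (n + γ - k * i) ^ p :=
  sum_congr rfl fun _ _ => by ring

theorem natCast_div_le_div_add {n k : ℕ} {γ : ℝ} (hγ : 0 ≤ γ) :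
    ((n / k : ℕ) : ℝ) ≤ (n + γ) / k :=
  Nat.cast_div_le.trans (div_le_div_of_nonneg_right (by linarith) k.cast_nonneg)

theorem Ssum_q_zero_le (n k p : ℕ) {γ : ℝ} (hk : 1 ≤ k) (hγ : 0 ≤ γ) :
    Ssum n k γ p 0 ≤ (n + γ) ^ (p + 1) / (p + 1) := by
  set A : ℝ := n + γ
  have hK : (1 : ℝ) ≤ k := by exact_mod_cast hk
  have hK0 : (0 : ℝ) < k := zero_lt_one.trans_le hK
  have hA : 0 ≤ A := by positivity
  have hm : ((n / k : ℕ) : ℝ) ≤ A / k := natCast_div_le_div_add hγ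
  have hanti : AntitoneOn (fun x : ℝ => x ^ 0 * (A - k * x) ^ p) (Set.Icc 0 (A / k)) := by
    simpa using antitoneOn_pow_mul_sub_mul_pow p 0 hK0 hA
  calc Ssum n k γ p 0
        = ∑ i ∈ Ico 0 (n / k), ((i + 1 : ℕ) : ℝ) ^ 0 * (A - k * (i + 1 : ℕ)) ^ p := by
        rw [Ssum_eq_sum, ← Ico_add_one_right_eq_Icc, ← sum_Ico_add' _ 0 (n / k) 1]
    _ ≤ ∫ x in ((0 : ℕ) : ℝ)..(n / k : ℕ), x ^ 0 * (A - k * x) ^ p :=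
        AntitoneOn.sum_le_integral_Ico (Nat.zero_le _)
          (hanti.mono (Set.Icc_subset_Icc (by simp) hm))
    _ ≤ ∫ x in (0 : ℝ)..A / k, x ^ 0 * (A - k * x) ^ p :=
        intervalIntegral.integral_mono_interval (by simp) (by simp) hm
          (MeasureTheory.ae_restrict_of_forall_mem measurableSet_Ioc fun x hx =>
            pow_mul_sub_mul_pow_nonneg p 0 hK0 (Set.Ioc_subset_Icc_self hx))
          ((by fun_prop : Continuous fun x : ℝ => x ^ 0 * (A - k * x) ^ p).intervalIntegrable _ _)
    _ = A ^ (p + 1) / ((p + 1) * k) := by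
        rw [integral_pow_mul_sub_mul_pow, Nat.factorial_succ]
        push_cast
        field_simp
        ring
    _ ≤ A ^ (p + 1) / (p + 1) := by
        gcongr
        exact le_mul_of_one_le_right (by positivity) hK

theorem Ssum_p_zero_le (n k q : ℕ) {γ : ℝ} (hγ : 0 ≤ γ) :
    Ssum n k γ 0 q ≤ q ! * 2 ^ (q + 1) * (n + γ) ^ (q + 1) / (q + 1)! := by
  have hm : ((n / k : ℕ) : ℝ) ≤ n + γ :=
    (Nat.cast_le.mpr (Nat.div_le_self n k)).trans (le_add_of_nonneg_right hγ)
  have hcrude : Ssum n k γ 0 q ≤ (n + γ) ^ (q + 1) :=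
    calc Ssum n k γ 0 q = ∑ i ∈ Icc 1 (n / k), (i : ℝ) ^ q := by simp [Ssum]
      _ ≤ ∑ _i ∈ Icc 1 (n / k), ((n / k : ℕ) : ℝ) ^ q :=
        sum_le_sum fun i hi => pow_le_pow_left₀ i.cast_nonneg
          (Nat.cast_le.mpr (mem_Icc.mp hi).2) q
      _ = ((n / k : ℕ) : ℝ) ^ (q + 1) := by simp [pow_succ, mul_comm]
      _ ≤ (n + γ) ^ (q + 1) := pow_le_pow_left₀ (Nat.cast_nonneg _) hm _
  have hfact : ((q + 1)! : ℝ) ≤ q ! * 2 ^ (q + 1) := by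
    rw [Nat.factorial_succ, mul_comm]
    exact_mod_cast Nat.mul_le_mul_left _ (Nat.lt_two_pow_self).le
  rw [le_div_iff₀ (by positivity)]
  calc Ssum n k γ 0 q * (q + 1)! ≤ (n + γ) ^ (q + 1) * (q ! * 2 ^ (q + 1)) := by gcongr
    _ = q ! * 2 ^ (q + 1) * (n + γ) ^ (q + 1) := by ring

theorem Ssum_le_integral_add_peak {n k p q : ℕ} {γ : ℝ} (hk : 0 < k) (hγ : 0 ≤ γ)
    (hpq : 0 < p + q) :
    Ssum n k γ p q ≤ q ! * p ! / (p + q + 1)! * (n + γ) ^ (p + q + 1) / k ^ (q + 1)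
      + p ^ p * q ^ q * (n + γ) ^ (p + q) / (k ^ q * (p + q) ^ (p + q)) := by
  have hK : (0 : ℝ) < k := by exact_mod_cast hk
  have hA : (0 : ℝ) ≤ n + γ := by positivity
  rw [Ssum_eq_sum, ← integral_pow_mul_sub_mul_pow]
  exact sum_Icc_le_integral_add_of_quasiconcaveOn
    (quasiconcaveOn_Icc_of_monotoneOn_of_antitoneOn (monotoneOn_pow_mul_sub_mul_pow p q hK)
      (antitoneOn_pow_mul_sub_mul_pow p q hK hA))
    ((by fun_prop : Continuous fun x : ℝ => x ^ q * (n + γ - k * x) ^ p).intervalIntegrable _ _)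
    (fun x hx => pow_mul_sub_mul_pow_nonneg p q hK hx)
    (fun x hx => pow_mul_sub_mul_pow_le p q hK hA hpq hx)
    (natCast_div_le_div_add hγ)

theorem Ssum_le_of_pos {n k p q : ℕ} {γ : ℝ} (hk : 1 ≤ k) (hγ : 0 ≤ γ) (hp : 0 < p)
    (hq : 0 < q) :
    Ssum n k γ p q ≤ ((q ! : ℝ) / k ^ (q + 1) +
      p ^ p * q ^ q * (p + q + 1) / (k ^ q * (1 + γ) * (p + q) ^ p)) * (n + γ) ^ (p + q + 1) /
        ∏ j ∈ Icc 1 (q + 1), ((p : ℝ) + j) := by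
  set A : ℝ := n + γ
  set D : ℝ := ∏ j ∈ Icc 1 (q + 1), ((p : ℝ) + j)
  have hD : 0 < D := by positivity
  rcases (n / k).eq_zero_or_pos with hm | hm
  · rw [Ssum, hm, Icc_eq_empty_of_lt zero_lt_one, sum_empty]
    positivity
  have hA : 1 + γ ≤ A := by
    have hn : (1 : ℝ) ≤ n := by exact_mod_cast hm.trans_le (Nat.div_le_self n k)
    simp only [A]
    linarith
  have hbeta : (q ! * p ! / (p + q + 1)! * A ^ (p + q + 1) / k ^ (q + 1) : ℝ)
      = q ! / k ^ (q + 1) * A ^ (p + q + 1) / D := by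
    have hfact : (p ! : ℝ) * D = (p + q + 1)! := factorial_mul_prod_Icc_add p q
    rw [← hfact]
    field_simp
  have hpeak : (p ^ p * q ^ q * A ^ (p + q) / (k ^ q * (p + q) ^ (p + q)) : ℝ)
      ≤ p ^ p * q ^ q * (p + q + 1) / (k ^ q * (1 + γ) * (p + q) ^ p) * A ^ (p + q + 1) / D :=
    calc (p ^ p * q ^ q * A ^ (p + q) / (k ^ q * (p + q) ^ (p + q)) : ℝ)
        = p ^ p * q ^ q * A ^ (p + q) / (k ^ q * (p + q) ^ (p + q)) * 1 * 1 := by ring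
      _ ≤ p ^ p * q ^ q * A ^ (p + q) / (k ^ q * (p + q) ^ (p + q))
          * ((p + q) ^ q * (p + q + 1) / D) * (A / (1 + γ)) := by
        gcongr
        · exact (one_le_div hD).mpr (prod_Icc_add_le p q)
        · exact (one_le_div (by positivity)).mpr hA
      _ = _ := by
        field_simp
        ring
  rw [add_mul, add_div]
  exact (Ssum_le_integral_add_peak hk hγ (by omega)).trans (add_le_add hbeta.le hpeak)

/-- `S(n,k,γ,p,q) ≤ β(q,p,k,γ) (n+γ)^{p+q+1} / ((p+1)⋯(p+q+1))`. -/
theorem Ssum_le (n k p q : ℕ) (hk : 1 ≤ k) (γ : ℝ) (hγ : 0 ≤ γ) :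
    Ssum n k γ p q
      ≤ betaPrefactor q p k γ * ((n : ℝ) + γ) ^ (p + q + 1) /
          ∏ j ∈ Finset.Icc 1 (q + 1), ((p : ℝ) + j) := by
  rcases q.eq_zero_or_pos with rfl | hq
  · simpa [betaPrefactor] using Ssum_q_zero_le n k p hk hγ
  rw [betaPrefactor, if_neg hq.ne']
  rcases p.eq_zero_or_pos with rfl | hp
  · have hprod : ∏ j ∈ Icc 1 (q + 1), (j : ℝ) = (q + 1)! := by
      simpa using factorial_mul_prod_Icc_add 0 q
    simpa [hprod] using Ssum_p_zero_le n k q hγ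
  · rw [if_neg hp.ne']
    exact Ssum_le_of_pos hk hγ hp hq
end

section
/- Let d ≥ 1 be an integer and define β(0,p,k,γ) = 1, β(q,0,k,γ) = q!·2^{q+1}, and β(q,p,k,γ) = q!/k^{q+1} + (p^p q^q (p+q+1)) / (k^q (1+γ) (p+q)^p) for integers p, q ≥ 1, k ≥ 1 and real γ ≥ 0. Let α₁ = 1 and, for d ≥ 2, α_d = max{(d−1)!·2^d, (d−1)! + d(d−1)^{d−1}}. Then for all integers m ≥ 1 and 1 ≤ k ≤ m, and any constant c₂ ≥ 1, one has β(d−1, d(m−k), k, c₂(m−k)^{(d+1)/d}) ≤ α_d. -/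
open scoped BigOperators

/-- The constant `α_d`: `α₁ = 1` and, for `d ≥ 2`,
`α_d = max{(d−1)!·2^d, (d−1)! + d(d−1)^{d−1}}`. -/
noncomputable def alphaConst (d : ℕ) : ℝ :=
  if d = 1 then 1
  else max (((d - 1).factorial : ℝ) * 2 ^ d)
    (((d - 1).factorial : ℝ) + d * ((d : ℝ) - 1) ^ (d - 1))

/-! For `q, p ≥ 1` the second summand of `β(q,p,k,γ)` is at most `q^q` as soon as
`p + q + 1 ≤ (q + 1)(1 + γ)`: Bernoulli's inequality gives `(q + 1) p^p ≤ (p + q)^p`.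
With `q = d - 1`, `p = d t` and `t = m - k`, that condition reads `t ≤ γ`, which holds because
`γ = c₂ t^{(d+1)/d}` with `c₂ ≥ 1`. -/

open Nat

lemma one_add_mul_pow_le_add_pow {p : ℕ} (hp : p ≠ 0) {x : ℝ} (hx : -2 * p ≤ x) :
    (1 + x) * (p : ℝ) ^ p ≤ ((p : ℝ) + x) ^ p := by
  have hp' : (0 : ℝ) < p := by positivity
  have hbern := one_add_mul_le_pow (a := x / p) (by rwa [le_div_iff₀ hp']) p
  calc (1 + x) * (p : ℝ) ^ p = (1 + p * (x / p)) * (p : ℝ) ^ p := by field_simp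
    _ ≤ (1 + x / p) ^ p * (p : ℝ) ^ p := by gcongr
    _ = ((p : ℝ) + x) ^ p := by rw [← mul_pow]; field_simp

@[simp]
lemma betaPrefactor_zero_left (p k : ℕ) (γ : ℝ) : betaPrefactor 0 p k γ = 1 := by
  simp [betaPrefactor]

lemma betaPrefactor_zero_mid {q : ℕ} (hq : q ≠ 0) (k : ℕ) (γ : ℝ) :
    betaPrefactor q 0 k γ = q ! * 2 ^ (q + 1) := by
  simp [betaPrefactor, hq]

lemma betaPrefactor_le_factorial_add_pow {q p k : ℕ} {γ : ℝ} (hq : q ≠ 0) (hp : p ≠ 0)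
    (hk : 1 ≤ k) (hγ : (p + q + 1 : ℝ) ≤ (q + 1) * (1 + γ)) :
    betaPrefactor q p k γ ≤ q ! + (q : ℝ) ^ q := by
  rw [betaPrefactor, if_neg hq, if_neg hp]
  have hk' : (1 : ℝ) ≤ k := by exact_mod_cast hk
  have hγ' : 0 < 1 + γ := pos_of_mul_pos_right (lt_of_lt_of_le (by positivity) hγ) (by positivity)
  have hbern := one_add_mul_pow_le_add_pow hp (x := q) (by have := q.cast_nonneg (α := ℝ); linarith)
  gcongr
  · exact div_le_self (by positivity) (one_le_pow₀ hk')
  · rw [div_le_iff₀ (by positivity)]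
    calc (p : ℝ) ^ p * q ^ q * (p + q + 1) ≤ (p : ℝ) ^ p * q ^ q * ((q + 1) * (1 + γ)) := by
          gcongr
      _ = (q : ℝ) ^ q * (1 + γ) * ((1 + q) * (p : ℝ) ^ p) := by ring
      _ ≤ (q : ℝ) ^ q * (1 + γ) * ((p + q) ^ p) := by gcongr
      _ = (q : ℝ) ^ q * (1 * (1 + γ) * (p + q) ^ p) := by ring
      _ ≤ (q : ℝ) ^ q * ((k : ℝ) ^ q * (1 + γ) * (p + q) ^ p) := by
          gcongr
          exact one_le_pow₀ hk'

lemma one_le_alphaConst (d : ℕ) : 1 ≤ alphaConst d := by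
  unfold alphaConst
  split_ifs
  · rfl
  · exact le_max_of_le_left (one_le_mul_of_one_le_of_one_le (mod_cast (d - 1).factorial_pos)
      (one_le_pow₀ one_le_two))

lemma alphaConst_succ {q : ℕ} (hq : q ≠ 0) :
    alphaConst (q + 1) = max ((q ! : ℝ) * 2 ^ (q + 1)) (q ! + (q + 1) * (q : ℝ) ^ q) := by
  simp [alphaConst, hq]

theorem betaPrefactor_le_alphaConst_general
    (d : ℕ) (c₂ : ℝ) (hc₂ : 1 ≤ c₂)
    (m k : ℕ) (hk1 : 1 ≤ k) :
    betaPrefactor (d - 1) (d * (m - k)) k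
        (c₂ * ((m - k : ℕ) : ℝ) ^ (((d : ℝ) + 1) / d))
      ≤ alphaConst d := by
  obtain hd | ⟨q, hq, rfl⟩ : d - 1 = 0 ∨ ∃ q, q ≠ 0 ∧ d = q + 1 :=
    (eq_or_ne (d - 1) 0).imp_right fun h => ⟨d - 1, h, by omega⟩
  · rw [hd, betaPrefactor_zero_left]
    exact one_le_alphaConst d
  rw [Nat.add_sub_cancel, alphaConst_succ hq]
  obtain ht | ht := eq_or_ne (m - k) 0
  · rw [ht, mul_zero, betaPrefactor_zero_mid hq]
    exact le_max_left _ _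
  set t := m - k
  have ht_le_γ : (t : ℝ) ≤ c₂ * (t : ℝ) ^ ((((q + 1 : ℕ) : ℝ) + 1) / (q + 1 : ℕ)) := by
    refine (Real.self_le_rpow_of_one_le (mod_cast one_le_iff_ne_zero.2 ht) ?_).trans
      (le_mul_of_one_le_left (by positivity) hc₂)
    rw [one_le_div (by positivity)]
    linarith
  refine (betaPrefactor_le_factorial_add_pow hq (by positivity) hk1 ?_).trans
    (le_max_of_le_right ?_)
  · push_cast at ht_le_γ ⊢
    nlinarith
  · gcongr
    exact le_mul_of_one_le_left (by positivity) (by linarith [q.cast_nonneg (α := ℝ)])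

/-- for all `m ≥ 1`, `1 ≤ k ≤ m` and `c₂ ≥ 1`, the prefactor satisfies
`β(d−1, d(m−k), k, c₂ (m−k)^{(d+1)/d}) ≤ α_d`. -/
theorem betaPrefactor_le_alphaConst
    (d : ℕ) (hd : 1 ≤ d) (c₂ : ℝ) (hc₂ : 1 ≤ c₂)
    (m k : ℕ) (hm : 1 ≤ m) (hk1 : 1 ≤ k) (hkm : k ≤ m) :
    betaPrefactor (d - 1) (d * (m - k)) k
        (c₂ * ((m - k : ℕ) : ℝ) ^ (((d : ℝ) + 1) / d))
      ≤ alphaConst d :=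
  betaPrefactor_le_alphaConst_general d c₂ hc₂ m k hk1
end

section
/- Let Ω ⊂ ℝ^d, and let constants C₀, η, α, c > 0 and p ≥ 1 be given. Let f be a real-valued function on the finite multisets of Ω. Suppose that for each N ≥ 2 there are a constant V_{0N} ∈ ℝ and symmetric functions V_{nN} : Ω^n → ℝ (1 ≤ n ≤ N) such that the function f_N([x₁,…,x_M]) := V_{0N} + Σ_{n=1}^N Σ_{1 ≤ j₁ < … < j_n ≤ M} V_{nN}(x_{j₁},…,x_{j_n}) satisfies |f(𝐱) − f_N(𝐱)| ≤ C₀ e^{−ηN} for every finite multiset 𝐱 of Ω; and suppose that for each n, N, D there are functions V_{nND} : Ω^n → ℝ with |V_{nN}(x₁,…,x_n) − V_{nND}(x₁,…,x_n)| ≤ C₀ c^n e^{−αD} for all x₁,…,x_n ∈ Ω. Define f_{N,D} like f_N but with V_{nND} in place of V_{nN}. Then there exist constants c₁, C > 0 (depending only on C₀, η, α, c, p) such that, taking D = ⌈c₁ N log N⌉, for all N ≥ 2 and all finite multisets 𝐱 = [x₁,…,x_M] of Ω with M ≤ N^p, |f(𝐱) − f_{N,D}(𝐱)| ≤ C e^{−ηN}.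 -/
open scoped BigOperators

/-- The cluster (many-body) expansion
`V₀ + ∑_{n=1}^N ∑_{j₁<…<j_n} V_n(x_{j₁},…,x_{j_n})`, where the `n = 0` term is the
constant `V 0`; the inner sum runs over `n`-element subsets of `{1,…,M}` enumerated in
increasing order. -/
noncomputable def clusterSum (d M : ℕ) (x : Fin M → (Fin d → ℝ))
    (V : (n : ℕ) → (Fin n → (Fin d → ℝ)) → ℝ) (N : ℕ) : ℝ :=
  ∑ n ∈ Finset.range (N + 1),
    ∑ s ∈ (Finset.powersetCard n (Finset.univ : Finset (Fin M))).attach,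
      V n (fun i =>
        x ((s.1.orderIsoOfFin ((Finset.mem_powersetCard.mp s.2).2) i).1))

/-!
There are `M.choose n ≤ M ^ n ≤ N ^ (p * n)` clusters of size `n`, so replacing every `V_{nN}`
by `V_{nND}` changes `f_N` by at most
`∑_{n ≤ N} Mⁿ C₀ cⁿ e^{-αD} ≤ C₀ (N + 1) ((1 + c) N^p)^N e^{-αD} ≤ C₀ exp(N (1 + log (1 + c) + p log N) - αD)`.
Taking `D ≥ c₁ N log N` with `c₁` large enough makes the exponent at most `-ηN`; the triangle
inequality with the bound on `f - f_N` then gives `|f - f_{N,D}| ≤ 2 C₀ e^{-ηN}`.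
-/

open Finset Real

theorem abs_clusterSum_sub_le {d M N : ℕ} {Ω : Set (Fin d → ℝ)} {x : Fin M → (Fin d → ℝ)}
    (hx : ∀ j, x j ∈ Ω) {V W : (n : ℕ) → (Fin n → (Fin d → ℝ)) → ℝ} {ε : ℕ → ℝ}
    (hVW : ∀ n ≤ N, ∀ y : Fin n → (Fin d → ℝ), (∀ i, y i ∈ Ω) → |V n y - W n y| ≤ ε n) :
    |clusterSum d M x V N - clusterSum d M x W N| ≤
      ∑ n ∈ range (N + 1), (M.choose n : ℝ) * ε n := by
  unfold clusterSum
  rw [← sum_sub_distrib]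
  refine (abs_sum_le_sum_abs _ _).trans (sum_le_sum fun n hn => ?_)
  rw [← sum_sub_distrib]
  refine (abs_sum_le_sum_abs _ _).trans ?_
  refine (sum_le_sum fun s _ => hVW n (Nat.lt_succ_iff.mp (mem_range.mp hn)) _
    fun i => hx _).trans_eq ?_
  simp [card_powersetCard]

theorem sum_choose_mul_pow_le {M N : ℕ} {c B : ℝ} (hc : 0 ≤ c) (hB : 1 ≤ B)
    (hMB : M * c ≤ B) :
    ∑ n ∈ range (N + 1), (M.choose n : ℝ) * c ^ n ≤ (N + 1) * B ^ N := by
  calc ∑ n ∈ range (N + 1), (M.choose n : ℝ) * c ^ n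
      ≤ ∑ _n ∈ range (N + 1), B ^ N := by
        refine sum_le_sum fun n hn => ?_
        calc (M.choose n : ℝ) * c ^ n ≤ (M : ℝ) ^ n * c ^ n := by
              gcongr; exact_mod_cast Nat.choose_le_pow M n
          _ = (M * c) ^ n := (mul_pow _ _ _).symm
          _ ≤ B ^ n := by gcongr
          _ ≤ B ^ N := pow_le_pow_right₀ hB (Nat.lt_succ_iff.mp (mem_range.mp hn))
    _ = (N + 1) * B ^ N := by simp

theorem add_one_mul_pow_le_exp {N : ℕ} {B : ℝ} (hB : 0 < B) :
    ((N : ℝ) + 1) * B ^ N ≤ exp (N * (1 + log B)) := by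
  rw [mul_one_add, exp_add, ← exp_log (pow_pos hB N), log_pow]
  gcongr
  exact add_one_le_exp _

/-- The rate `c₁` of the degree `D = ⌈c₁ N log N⌉`: since `log N ≥ log 2`, it makes
`α c₁ N log N ≥ N (1 + log (1 + c) + η) + p N log N`. -/
noncomputable def clusterDegreeRate (c η α p : ℝ) : ℝ :=
  ((1 + log (1 + c) + η) / log 2 + p) / α

theorem clusterDegreeRate_pos {c η α p : ℝ} (hc : 0 ≤ c) (hη : 0 ≤ η) (hα : 0 < α)
    (hp : 0 ≤ p) : 0 < clusterDegreeRate c η α p := by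
  have : 0 ≤ log (1 + c) := log_nonneg (by linarith)
  unfold clusterDegreeRate
  have := log_pos one_lt_two
  positivity

theorem exponent_le_of_clusterDegreeRate_le {c η α p : ℝ} (hc : 0 ≤ c) (hη : 0 ≤ η)
    (hα : 0 < α) {N : ℕ} (hN : 2 ≤ N) {D : ℝ}
    (hD : clusterDegreeRate c η α p * N * log N ≤ D) :
    N * (1 + log (1 + c) + p * log N) - α * D ≤ -η * N := by
  have hlog2 : 0 < log 2 := log_pos one_lt_two
  have hlogN : log 2 ≤ log N := log_le_log two_pos (by exact_mod_cast hN)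
  have hA : 0 ≤ 1 + log (1 + c) + η := by
    have := log_nonneg (by linarith : (1 : ℝ) ≤ 1 + c)
    linarith
  have hrate : α * (clusterDegreeRate c η α p * N * log N) =
      (1 + log (1 + c) + η) * N * (log N / log 2) + p * N * log N := by
    unfold clusterDegreeRate
    field_simp
  have hratio : 1 ≤ log N / log 2 := (one_le_div hlog2).mpr hlogN
  have hN0 : (0 : ℝ) ≤ N := N.cast_nonneg
  have : (1 + log (1 + c) + η) * N ≤ (1 + log (1 + c) + η) * N * (log N / log 2) :=
    le_mul_of_one_le_right (by positivity) hratio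
  nlinarith [mul_le_mul_of_nonneg_left hD hα.le]

theorem sum_choose_mul_pow_mul_exp_le {c η α p : ℝ} (hc : 0 ≤ c) (hη : 0 ≤ η) (hα : 0 < α)
    (hp : 0 ≤ p) {N M : ℕ} (hN : 2 ≤ N) (hM : (M : ℝ) ≤ (N : ℝ) ^ p) :
    (∑ n ∈ range (N + 1), (M.choose n : ℝ) * c ^ n) *
        exp (-α * ⌈clusterDegreeRate c η α p * N * log N⌉₊) ≤ exp (-η * N) := by
  have hN1 : (1 : ℝ) ≤ N := by exact_mod_cast one_le_two.trans hN
  have hNp : 1 ≤ (N : ℝ) ^ p := one_le_rpow hN1 hp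
  set B := (1 + c) * (N : ℝ) ^ p
  have hB : 1 ≤ B := one_le_mul_of_one_le_of_one_le (by linarith) hNp
  have hMB : M * c ≤ B := by
    calc M * c ≤ (N : ℝ) ^ p * c := by gcongr
      _ ≤ B := by nlinarith
  have hlogB : log B = log (1 + c) + p * log N := by
    rw [log_mul (by linarith) (by positivity), log_rpow (by linarith)]
  calc (∑ n ∈ range (N + 1), (M.choose n : ℝ) * c ^ n) *
        exp (-α * ⌈clusterDegreeRate c η α p * N * log N⌉₊)
      ≤ exp (N * (1 + log B)) * exp (-α * ⌈clusterDegreeRate c η α p * N * log N⌉₊) := by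
        gcongr
        exact (sum_choose_mul_pow_le hc hB hMB).trans (add_one_mul_pow_le_exp (by linarith))
    _ = exp (N * (1 + log (1 + c) + p * log N) -
          α * ⌈clusterDegreeRate c η α p * N * log N⌉₊) := by
        rw [← exp_add, hlogB]; ring_nf
    _ ≤ exp (-η * N) :=
        exp_le_exp.mpr (exponent_le_of_clusterDegreeRate_le hc hη hα hN (Nat.le_ceil _))

theorem multiset_cluster_expansion_rate_general
    (d : ℕ) (Ω : Set (Fin d → ℝ)) (C₀ η α c p : ℝ)
    (hC₀ : 0 < C₀) (hη : 0 < η) (hα : 0 < α) (hc : 0 < c) (hp : 1 ≤ p)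
    (f : Multiset (Fin d → ℝ) → ℝ)
    (V : (n N : ℕ) → (Fin n → (Fin d → ℝ)) → ℝ)
    (VD : (n N D : ℕ) → (Fin n → (Fin d → ℝ)) → ℝ)
    (hbody : ∀ N : ℕ, 2 ≤ N → ∀ M : ℕ, ∀ x : Fin M → (Fin d → ℝ),
      (∀ j, x j ∈ Ω) →
      |f (Multiset.map x Finset.univ.val) - clusterSum d M x (fun n => V n N) N|
        ≤ C₀ * Real.exp (-η * N))
    (hVD : ∀ n N D : ℕ, ∀ y : Fin n → (Fin d → ℝ), (∀ i, y i ∈ Ω) →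
      |V n N y - VD n N D y| ≤ C₀ * c ^ n * Real.exp (-α * D)) :
    ∃ c₁ C : ℝ, 0 < c₁ ∧ 0 < C ∧
      ∀ N : ℕ, 2 ≤ N → ∀ M : ℕ, ∀ x : Fin M → (Fin d → ℝ),
        (∀ j, x j ∈ Ω) → (M : ℝ) ≤ (N : ℝ) ^ p →
        |f (Multiset.map x Finset.univ.val) -
            clusterSum d M x (fun n => VD n N ⌈c₁ * N * Real.log N⌉₊) N|
          ≤ C * Real.exp (-η * N) := by
  refine ⟨clusterDegreeRate c η α p, 2 * C₀,
    clusterDegreeRate_pos hc.le hη.le hα (by linarith), by positivity, ?_⟩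
  intro N hN M x hx hM
  set D := ⌈clusterDegreeRate c η α p * N * log N⌉₊
  have hcluster := abs_clusterSum_sub_le hx (N := N) fun n _ y hy => hVD n N D y hy
  have hnum := sum_choose_mul_pow_mul_exp_le hc.le hη.le hα (by linarith) hN hM
  calc |f (Multiset.map x univ.val) - clusterSum d M x (fun n => VD n N D) N|
      ≤ |f (Multiset.map x univ.val) - clusterSum d M x (fun n => V n N) N| +
        |clusterSum d M x (fun n => V n N) N - clusterSum d M x (fun n => VD n N D) N| :=
        abs_sub_le _ _ _
    _ ≤ C₀ * exp (-η * N) +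
        C₀ * ((∑ n ∈ range (N + 1), (M.choose n : ℝ) * c ^ n) * exp (-α * D)) := by
        gcongr
        · exact hbody N hN M x hx
        · refine hcluster.trans_eq ?_
          rw [sum_mul, mul_sum]
          exact sum_congr rfl fun n _ => by ring
    _ ≤ C₀ * exp (-η * N) + C₀ * exp (-η * N) := by gcongr
    _ = 2 * C₀ * exp (-η * N) := by ring

/-- error estimate for the cluster expansion of a multiset function with
polynomially-approximated body-ordered components, with degree `D = ⌈c₁ N log N⌉`. -/
theorem multiset_cluster_expansion_rate
    (d : ℕ) (Ω : Set (Fin d → ℝ)) (C₀ η α c p : ℝ)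
    (hC₀ : 0 < C₀) (hη : 0 < η) (hα : 0 < α) (hc : 0 < c) (hp : 1 ≤ p)
    (f : Multiset (Fin d → ℝ) → ℝ)
    (V : (n N : ℕ) → (Fin n → (Fin d → ℝ)) → ℝ)
    (VD : (n N D : ℕ) → (Fin n → (Fin d → ℝ)) → ℝ)
    (hVsym : ∀ n N : ℕ, ∀ σ : Equiv.Perm (Fin n), ∀ y : Fin n → (Fin d → ℝ),
      (∀ i, y i ∈ Ω) → V n N (y ∘ σ) = V n N y)
    (hbody : ∀ N : ℕ, 2 ≤ N → ∀ M : ℕ, ∀ x : Fin M → (Fin d → ℝ),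
      (∀ j, x j ∈ Ω) →
      |f (Multiset.map x Finset.univ.val) - clusterSum d M x (fun n => V n N) N|
        ≤ C₀ * Real.exp (-η * N))
    (hVD : ∀ n N D : ℕ, ∀ y : Fin n → (Fin d → ℝ), (∀ i, y i ∈ Ω) →
      |V n N y - VD n N D y| ≤ C₀ * c ^ n * Real.exp (-α * D)) :
    ∃ c₁ C : ℝ, 0 < c₁ ∧ 0 < C ∧
      ∀ N : ℕ, 2 ≤ N → ∀ M : ℕ, ∀ x : Fin M → (Fin d → ℝ),
        (∀ j, x j ∈ Ω) → (M : ℝ) ≤ (N : ℝ) ^ p →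
        |f (Multiset.map x Finset.univ.val) -
            clusterSum d M x (fun n => VD n N ⌈c₁ * N * Real.log N⌉₊) N|
          ≤ C * Real.exp (-η * N) :=
  multiset_cluster_expansion_rate_general d Ω C₀ η α c p hC₀ hη hα hc hp f V VD hbody hVD
end
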